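/- arXiv:1111.3880 — 9 statements merged into one kernel-verified Lean document; each statement's English description precedes it below -/
import Mathlib

section
/- Let E and F be finite-dimensional real vector spaces, let P ⊆ E be a nonempty polytope whose affine span is all of E, and let Q ⊆ F be a polytope. Then the hom-set Hom(P,Q) = {f : E → F affine | f(P) ⊆ Q} is a polytope in the vector space of affine maps from E to F; that is, there exists a finite set S of affine maps E → F such that Hom(P,Q) equals the convex hull of S. -/
/-!
Evaluation at a finite set `SP` with `P = conv SP` is a linear map from affine maps `E → F` to
`SP → F`; it is injective because `SP` affinely spans `E`, and, `Q` being convex, it identifies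
`Hom(P, Q)` with the preimage of the polytope `Q ^ SP`. A preimage of a polytope under an injective
linear map is a polytope, because a polytope meets a linear subspace, an intersection of finitely
many hyperplanes, in a polytope. Finally `conv S ∩ {f = 0}` is the convex hull of the points where
segments between points of `S` on opposite sides of the hyperplane cross it: if `x = ∑ w y • y`
lies on the hyperplane and not all weight sits on it, then `x` is the center of mass of the
crossing points of the segments `[i, j]` with `f i ≤ 0 < f j`, weighted by
`w i * w j * (f j - f i)`.
-/

lemma sum_product_mul_sub {α R : Type*} [CommRing R] (N P : Finset α) (w g : α → R) :
    ∑ p ∈ N ×ˢ P, w p.1 * w p.2 * (g p.2 - g p.1)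
      = (∑ j ∈ P, w j * g j) * ∑ i ∈ N, w i - (∑ i ∈ N, w i * g i) * ∑ j ∈ P, w j := by
  rw [Finset.sum_product, Finset.sum_mul_sum, Finset.sum_mul_sum, Finset.sum_comm (s := P),
    ← Finset.sum_sub_distrib]
  refine Finset.sum_congr rfl fun i _ => ?_
  rw [← Finset.sum_sub_distrib]
  exact Finset.sum_congr rfl fun j _ => by ring

section Hyperplane

variable {𝕜 W : Type*} [Field 𝕜] [AddCommGroup W] [Module 𝕜 W] (f : W →ᵃ[𝕜] 𝕜)

/-- The point where the line through `u` and `v` meets `{f = 0}`; it is `u` when `f u = f v`,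
as `x / 0 = 0`. -/
noncomputable def cutPoint (u v : W) : W :=
  AffineMap.lineMap u v (f u / (f u - f v))

lemma cutPoint_self (u : W) : cutPoint f u u = u :=
  AffineMap.lineMap_same_apply _ _

lemma sub_smul_cutPoint {u v : W} (h : f u ≠ f v) :
    (f v - f u) • cutPoint f u v = f v • u - f u • v := by
  have : f u - f v ≠ 0 := sub_ne_zero.2 h
  rw [cutPoint, AffineMap.lineMap_apply_module, smul_add, smul_smul, smul_smul,
    sub_eq_add_neg (f v • u), ← neg_smul]
  congr 2 <;> field_simp <;> ring

lemma sum_product_smul_cutPoint {N P : Finset W} (w : W → 𝕜)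
    (hne : ∀ i ∈ N, ∀ j ∈ P, f i ≠ f j) :
    ∑ p ∈ N ×ˢ P, (w p.1 * w p.2 * (f p.2 - f p.1)) • cutPoint f p.1 p.2
      = (∑ j ∈ P, w j * f j) • ∑ i ∈ N, w i • i - (∑ i ∈ N, w i * f i) • ∑ j ∈ P, w j • j := by
  rw [Finset.sum_product, Finset.sum_smul_sum, Finset.sum_smul_sum, Finset.sum_comm (s := P),
    ← Finset.sum_sub_distrib]
  refine Finset.sum_congr rfl fun i hi => ?_
  rw [← Finset.sum_sub_distrib]
  refine Finset.sum_congr rfl fun j hj => ?_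
  rw [mul_smul, sub_smul_cutPoint f (hne i hi j hj)]
  module

variable [LinearOrder 𝕜]

lemma apply_cutPoint {u v : W} (hu : f u ≤ 0) (hv : 0 ≤ f v) : f (cutPoint f u v) = 0 := by
  rw [cutPoint, AffineMap.apply_lineMap, AffineMap.lineMap_apply_module]
  rcases eq_or_ne (f u) (f v) with h | h
  · simp [h, le_antisymm (h ▸ hu) hv]
  · have : f u - f v ≠ 0 := sub_ne_zero.2 h
    field_simp
    ring

open Classical in
noncomputable def cutSet (S : Finset W) : Finset W :=
  ((S ×ˢ S).filter fun p => f p.1 ≤ 0 ∧ 0 ≤ f p.2).image fun p => cutPoint f p.1 p.2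

variable {f} in
lemma cutPoint_mem_cutSet {S : Finset W} {u v : W} (hu : u ∈ S) (hv : v ∈ S)
    (hfu : f u ≤ 0) (hfv : 0 ≤ f v) : cutPoint f u v ∈ cutSet f S := by
  classical
  exact Finset.mem_image.2 ⟨(u, v), by simp [hu, hv, hfu, hfv], rfl⟩

variable [IsStrictOrderedRing 𝕜]

lemma cutPoint_mem_segment {u v : W} (hu : f u ≤ 0) (hv : 0 ≤ f v) :
    cutPoint f u v ∈ segment 𝕜 u v := by
  rw [segment_eq_image_lineMap]
  refine ⟨_, ⟨div_nonneg_of_nonpos hu (by linarith), ?_⟩, rfl⟩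
  rw [← neg_div_neg_eq]
  exact div_le_one_of_le₀ (by linarith) (by linarith)

lemma cutSet_subset (S : Finset W) :
    (cutSet f S : Set W) ⊆ convexHull 𝕜 (S : Set W) ∩ {x | f x = 0} := by
  intro x hx
  simp only [cutSet, Finset.coe_image, Finset.coe_filter, Finset.mem_product] at hx
  obtain ⟨⟨u, v⟩, ⟨⟨hu, hv⟩, hfu, hfv⟩, rfl⟩ := hx
  exact ⟨segment_subset_convexHull hu hv (cutPoint_mem_segment f hfu hfv),
    apply_cutPoint f hfu hfv⟩

variable {f}

lemma sum_smul_mem_convexHull_cutSet_of_forall {S : Finset W} {w : W → 𝕜}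
    (hw₀ : ∀ y ∈ S, 0 ≤ w y) (hw₁ : ∑ y ∈ S, w y = 1) (hf : ∀ y ∈ S, w y * f y = 0) :
    ∑ y ∈ S, w y • y ∈ convexHull 𝕜 (cutSet f S : Set W) := by
  classical
  have hsupp : ∀ y ∈ S, w y ≠ 0 → f y = 0 := fun y hy hwy =>
    (mul_eq_zero.1 (hf y hy)).resolve_left hwy
  rw [← Finset.sum_filter_of_ne (p := fun y => f y = 0)
    fun y hy hwy => hsupp y hy fun h => hwy (by rw [h, zero_smul])]
  refine (convex_convexHull 𝕜 _).sum_mem (fun y hy => hw₀ y (Finset.mem_filter.1 hy).1)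
    (by rwa [Finset.sum_filter_of_ne hsupp]) fun y hy => subset_convexHull 𝕜 _ ?_
  obtain ⟨hyS, hfy⟩ := Finset.mem_filter.1 hy
  simpa only [cutPoint_self, Finset.mem_coe] using cutPoint_mem_cutSet hyS hyS hfy.le hfy.ge

lemma sum_add_sum_mem_convexHull_cutSet {S N P : Finset W} {w : W → 𝕜} (hNS : N ⊆ S)
    (hPS : P ⊆ S) (hfN : ∀ i ∈ N, f i ≤ 0) (hfP : ∀ j ∈ P, 0 < f j) (hw₀ : ∀ y ∈ S, 0 ≤ w y)
    (hw₁ : ∑ i ∈ N, w i + ∑ j ∈ P, w j = 1)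
    (hf : ∑ i ∈ N, w i * f i = -∑ j ∈ P, w j * f j) (hD : 0 < ∑ j ∈ P, w j * f j) :
    ∑ i ∈ N, w i • i + ∑ j ∈ P, w j • j ∈ convexHull 𝕜 (cutSet f S : Set W) := by
  set D := ∑ j ∈ P, w j * f j
  have hμ : ∑ p ∈ N ×ˢ P, w p.1 * w p.2 * (f p.2 - f p.1) = D := by
    rw [sum_product_mul_sub, hf]
    linear_combination D * hw₁
  have hμz := sum_product_smul_cutPoint f w fun i hi j hj => ((hfN i hi).trans_lt (hfP j hj)).ne
  rw [hf, neg_smul, sub_neg_eq_add, ← smul_add] at hμz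
  have hmem := Finset.centerMass_mem_convexHull (N ×ˢ P) (s := (cutSet f S : Set W))
    (w := fun p => w p.1 * w p.2 * (f p.2 - f p.1)) (z := fun p => cutPoint f p.1 p.2)
    (fun p hp => ?_) (hμ ▸ hD) fun p hp => ?_
  · rwa [Finset.centerMass, hμ, hμz, inv_smul_smul₀ hD.ne'] at hmem
  · obtain ⟨hi, hj⟩ := Finset.mem_product.1 hp
    exact mul_nonneg (mul_nonneg (hw₀ _ (hNS hi)) (hw₀ _ (hPS hj)))
      (sub_nonneg.2 ((hfN _ hi).trans (hfP _ hj).le))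
  · obtain ⟨hi, hj⟩ := Finset.mem_product.1 hp
    exact cutPoint_mem_cutSet (hNS hi) (hPS hj) (hfN _ hi) (hfP _ hj).le

lemma sum_smul_mem_convexHull_cutSet {S : Finset W} {w : W → 𝕜} (hw₀ : ∀ y ∈ S, 0 ≤ w y)
    (hw₁ : ∑ y ∈ S, w y = 1) (hf : ∑ y ∈ S, w y * f y = 0) :
    ∑ y ∈ S, w y • y ∈ convexHull 𝕜 (cutSet f S : Set W) := by
  classical
  set N := S.filter fun y => f y ≤ 0
  set P := S.filter fun y => ¬f y ≤ 0
  have hsplit𝕜 (g : W → 𝕜) : ∑ y ∈ S, g y = ∑ y ∈ N, g y + ∑ y ∈ P, g y :=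
    (Finset.sum_filter_add_sum_filter_not S _ g).symm
  have hsplitW (g : W → W) : ∑ y ∈ S, g y = ∑ y ∈ N, g y + ∑ y ∈ P, g y :=
    (Finset.sum_filter_add_sum_filter_not S _ g).symm
  have hfN : ∀ i ∈ N, f i ≤ 0 := fun i hi => (Finset.mem_filter.1 hi).2
  have hfP : ∀ j ∈ P, 0 < f j := fun j hj => lt_of_not_ge (Finset.mem_filter.1 hj).2
  have hwfN : ∀ i ∈ N, w i * f i ≤ 0 := fun i hi =>
    mul_nonpos_of_nonneg_of_nonpos (hw₀ i (Finset.mem_filter.1 hi).1) (hfN i hi)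
  have hwfP : ∀ j ∈ P, 0 ≤ w j * f j := fun j hj =>
    mul_nonneg (hw₀ j (Finset.mem_filter.1 hj).1) (hfP j hj).le
  have hN : ∑ i ∈ N, w i * f i = -∑ j ∈ P, w j * f j := by
    linarith [hsplit𝕜 fun y => w y * f y]
  rcases (Finset.sum_nonneg hwfP).eq_or_lt with hD | hD
  · have hP0 := (Finset.sum_eq_zero_iff_of_nonneg hwfP).1 hD.symm
    have hN0 := (Finset.sum_eq_zero_iff_of_nonpos hwfN).1 (by rw [hN, ← hD, neg_zero])
    refine sum_smul_mem_convexHull_cutSet_of_forall hw₀ hw₁ fun y hy => ?_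
    by_cases hfy : f y ≤ 0
    exacts [hN0 y (Finset.mem_filter.2 ⟨hy, hfy⟩), hP0 y (Finset.mem_filter.2 ⟨hy, hfy⟩)]
  · rw [hsplitW]
    exact sum_add_sum_mem_convexHull_cutSet (Finset.filter_subset _ S)
      (Finset.filter_subset _ S) hfN hfP hw₀ ((hsplit𝕜 w).symm.trans hw₁) hN hD

variable (f) in
lemma convexHull_inter_zeroSet (S : Finset W) :
    convexHull 𝕜 (S : Set W) ∩ {x | f x = 0} = convexHull 𝕜 (cutSet f S : Set W) := by
  refine Set.Subset.antisymm ?_ <| convexHull_min (cutSet_subset f S) <|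
    (convex_convexHull 𝕜 _).inter ((convex_singleton 0).affine_preimage f)
  rintro x ⟨hx, hfx⟩
  obtain ⟨w, hw₀, hw₁, rfl⟩ := (Finset.convexHull_eq S).subset hx
  rw [Finset.centerMass_eq_of_sum_1 _ _ hw₁] at hfx ⊢
  refine sum_smul_mem_convexHull_cutSet hw₀ hw₁ ?_
  have := S.map_affineCombination id w hw₁ f
  rw [S.affineCombination_eq_linear_combination _ _ hw₁,
    S.affineCombination_eq_linear_combination _ _ hw₁] at this
  simpa using this.symm.trans hfx

end Hyperplane

def IsPolytope (𝕜 : Type*) {W : Type*} [Field 𝕜] [LinearOrder 𝕜] [IsStrictOrderedRing 𝕜]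
    [AddCommGroup W] [Module 𝕜 W] (K : Set W) : Prop :=
  ∃ S : Finset W, K = convexHull 𝕜 (S : Set W)

namespace IsPolytope

variable {𝕜 W : Type*} [Field 𝕜] [LinearOrder 𝕜] [IsStrictOrderedRing 𝕜] [AddCommGroup W]
  [Module 𝕜 W] {K : Set W}

lemma convex (hK : IsPolytope 𝕜 K) : Convex 𝕜 K := by
  obtain ⟨S, rfl⟩ := hK
  exact convex_convexHull 𝕜 _

lemma inter_zeroSet (hK : IsPolytope 𝕜 K) (f : W →ᵃ[𝕜] 𝕜) :
    IsPolytope 𝕜 (K ∩ {x | f x = 0}) := by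
  obtain ⟨S, rfl⟩ := hK
  exact ⟨cutSet f S, convexHull_inter_zeroSet f S⟩

lemma inter_forall_zeroSet (hK : IsPolytope 𝕜 K) {ι : Type*} (f : ι → W →ᵃ[𝕜] 𝕜)
    (I : Finset ι) : IsPolytope 𝕜 (K ∩ {x | ∀ i ∈ I, f i x = 0}) := by
  classical
  induction I using Finset.induction_on with
  | empty => simpa using hK
  | insert a I _ ih =>
    convert ih.inter_zeroSet (f a) using 1
    ext x
    simp only [Finset.mem_insert, forall_eq_or_imp, Set.mem_inter_iff, Set.mem_ofPred_eq]
    tauto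

lemma inter_submodule [FiniteDimensional 𝕜 W] (hK : IsPolytope 𝕜 K) (V : Submodule 𝕜 W) :
    IsPolytope 𝕜 (K ∩ V) := by
  let b := Module.finBasis 𝕜 (W ⧸ V)
  convert hK.inter_forall_zeroSet (fun i => ((b.coord i).comp V.mkQ).toAffineMap) Finset.univ
  ext x
  simp only [Set.mem_ofPred_eq, SetLike.mem_coe, Finset.mem_univ, true_imp_iff,
    LinearMap.coe_toAffineMap, LinearMap.comp_apply, Submodule.mkQ_apply,
    b.forall_coord_eq_zero_iff, Submodule.Quotient.mk_eq_zero]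

lemma preimage_of_injective {W' : Type*} [AddCommGroup W'] [Module 𝕜 W'] [FiniteDimensional 𝕜 W]
    (hK : IsPolytope 𝕜 K) {g : W' →ₗ[𝕜] W} (hg : Function.Injective g) :
    IsPolytope 𝕜 (g ⁻¹' K) := by
  obtain ⟨T, hT⟩ := hK.inter_submodule (LinearMap.range g)
  have hTg : (T : Set W) ⊆ Set.range g := fun t ht =>
    LinearMap.mem_range.1 (hT ▸ subset_convexHull 𝕜 _ ht : t ∈ K ∩ _).2
  refine ⟨T.preimage g hg.injOn, hg.image_injective ?_⟩
  rw [Finset.coe_preimage, g.image_convexHull, Set.image_preimage_eq_of_subset hTg,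
    Set.image_preimage_eq_inter_range, ← hT, LinearMap.coe_range]

lemma pi {ι : Type*} [Fintype ι] {W : ι → Type*} [∀ i, AddCommGroup (W i)]
    [∀ i, Module 𝕜 (W i)] {K : ∀ i, Set (W i)} (hK : ∀ i, IsPolytope 𝕜 (K i)) :
    IsPolytope 𝕜 (Set.univ.pi K) := by
  classical
  choose S hS using hK
  exact ⟨Fintype.piFinset S, by rw [Fintype.coe_piFinset, convexHull_pi, funext hS]⟩

end IsPolytope

namespace AffineMap

variable {k V P F : Type*} [CommRing k] [AddCommGroup V] [Module k V] [AddTorsor V P]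
  [AddCommGroup F] [Module k F]

variable (F) in
def restrictLinear (s : Set P) : (P →ᵃ[k] F) →ₗ[k] (s → F) where
  toFun f x := f x
  map_add' _ _ := rfl
  map_smul' _ _ := rfl

lemma restrictLinear_injective {s : Set P} (hs : affineSpan k s = ⊤) :
    Function.Injective (restrictLinear F s : (P →ᵃ[k] F) →ₗ[k] (s → F)) :=
  fun _ _ h => ext_on hs fun x hx => congrFun h ⟨x, hx⟩

end AffineMap

lemma setOf_forall_convexHull_mem_eq_preimage {𝕜 E F : Type*} [Field 𝕜] [LinearOrder 𝕜]
    [IsStrictOrderedRing 𝕜] [AddCommGroup E] [Module 𝕜 E] [AddCommGroup F] [Module 𝕜 F]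
    (s : Set E) {Q : Set F} (hQ : Convex 𝕜 Q) :
    {f : E →ᵃ[𝕜] F | ∀ x ∈ convexHull 𝕜 s, f x ∈ Q}
      = AffineMap.restrictLinear F s ⁻¹' Set.univ.pi fun _ => Q := by
  ext f
  simp only [Set.mem_ofPred_eq, Set.mem_preimage, Set.mem_univ_pi, Subtype.forall]
  exact (hQ.affine_preimage f).convexHull_subset_iff

theorem hom_polytope_is_polytope_general
    {E F : Type*} [AddCommGroup E] [Module ℝ E]
    [AddCommGroup F] [Module ℝ F] [FiniteDimensional ℝ F]
    (P : Set E) (Q : Set F)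
    (hP : ∃ SP : Finset E, P = convexHull ℝ (SP : Set E))
    (hPspan : affineSpan ℝ P = ⊤)
    (hQ : ∃ SQ : Finset F, Q = convexHull ℝ (SQ : Set F)) :
    ∃ S : Finset (E →ᵃ[ℝ] F),
      {f : E →ᵃ[ℝ] F | ∀ x ∈ P, f x ∈ Q} = convexHull ℝ (S : Set (E →ᵃ[ℝ] F)) := by
  obtain ⟨SP, rfl⟩ := hP
  rw [setOf_forall_convexHull_mem_eq_preimage _ (IsPolytope.convex hQ)]
  exact (IsPolytope.pi fun _ => hQ).preimage_of_injective
    (AffineMap.restrictLinear_injective (by rwa [← affineSpan_convexHull]))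

/-- For a nonempty full-dimensional polytope `P ⊆ E` and a polytope `Q ⊆ F`,
the hom-set `Hom(P,Q) = {f : E →ᵃ[ℝ] F | f(P) ⊆ Q}` is a polytope in the space of affine
maps, i.e. the convex hull of a finite set of affine maps. -/
theorem hom_polytope_is_polytope
    {E F : Type*} [AddCommGroup E] [Module ℝ E] [FiniteDimensional ℝ E]
    [AddCommGroup F] [Module ℝ F] [FiniteDimensional ℝ F]
    (P : Set E) (Q : Set F)
    (hP : ∃ SP : Finset E, P = convexHull ℝ (SP : Set E))
    (hPne : P.Nonempty)
    (hPspan : affineSpan ℝ P = ⊤)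
    (hQ : ∃ SQ : Finset F, Q = convexHull ℝ (SQ : Set F)) :
    ∃ S : Finset (E →ᵃ[ℝ] F),
      {f : E →ᵃ[ℝ] F | ∀ x ∈ P, f x ∈ Q} = convexHull ℝ (S : Set (E →ᵃ[ℝ] F)) :=
  hom_polytope_is_polytope_general P Q hP hPspan hQ
end

section
/- Let E, F, G be finite-dimensional real vector spaces, let P ⊆ E and Q ⊆ F be nonempty polytopes whose affine spans are E and F respectively, and let R ⊆ G be a polytope. Define join(P,Q) ⊆ E × ℝ × F as the convex hull of {(x,0,0) : x ∈ P} ∪ {(0,1,y) : y ∈ Q}, and let ι_P : E → E × ℝ × F, ι_P(x) = (x,0,0) and ι_Q : F → E × ℝ × F, ι_Q(y) = (0,1,y). Then the map f ↦ (f ∘ ι_P, f ∘ ι_Q) is a bijection from Hom(join(P,Q), R) = {f : E × ℝ × F → G affine | f(join(P,Q)) ⊆ R} onto the set product Hom(P,R) × Hom(Q,R). -/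
/-!
Every affine map on `E × ℝ × F` is glued from its restrictions `g`, `h` to the two affine slices
`E × {0} × {0}` and `{0} × {1} × F`, as `(x, t, y) ↦ g.linear x + t • (h 0 - g 0) + h.linear y + g 0`,
and any pair `(g, h)` glues in this way; so restriction is a bijection on all affine maps. Since the
preimage of the convex set `R` under an affine map is convex, such a map sends the join into `R`
exactly when it sends both generating pieces into `R`.
-/

namespace AffineMap

theorem linear_apply_eq_sub {k V W : Type*} [Ring k] [AddCommGroup V] [Module k V]
    [AddCommGroup W] [Module k W] (f : V →ᵃ[k] W) (v : V) : f.linear v = f v - f 0 :=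
  congrFun f.decomp' v

variable (k E F : Type*) [Ring k] [AddCommGroup E] [Module k E] [AddCommGroup F] [Module k F]

def joinInl : E →ᵃ[k] E × k × F :=
  (LinearMap.inl k E (k × F)).toAffineMap

def joinInr : F →ᵃ[k] E × k × F where
  toFun y := (0, 1, y)
  linear := LinearMap.inr k E (k × F) ∘ₗ LinearMap.inr k k F
  map_vadd' _ _ := by simp

@[simp] theorem joinInl_apply (x : E) : joinInl k E F x = (x, 0, 0) := rfl

@[simp] theorem joinInr_apply (y : F) : joinInr k E F y = (0, 1, y) := rfl

variable {k E F} {G : Type*} [AddCommGroup G] [Module k G]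

def joinLift (g : E →ᵃ[k] G) (h : F →ᵃ[k] G) : E × k × F →ᵃ[k] G :=
  (g.linear.coprod ((LinearMap.toSpanSingleton k G (h 0 - g 0)).coprod h.linear)).toAffineMap
    + const k _ (g 0)

theorem joinLift_apply (g : E →ᵃ[k] G) (h : F →ᵃ[k] G) (x : E) (t : k) (y : F) :
    joinLift g h (x, t, y) = g.linear x + t • (h 0 - g 0) + h.linear y + g 0 := by
  simp [joinLift, add_assoc]

@[simp] theorem joinLift_comp_joinInl (g : E →ᵃ[k] G) (h : F →ᵃ[k] G) :
    (joinLift g h).comp (joinInl k E F) = g := by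
  ext x
  simp [joinLift_apply, linear_apply_eq_sub]

@[simp] theorem joinLift_comp_joinInr (g : E →ᵃ[k] G) (h : F →ᵃ[k] G) :
    (joinLift g h).comp (joinInr k E F) = h := by
  ext y
  simp [joinLift_apply, linear_apply_eq_sub]

theorem joinLift_comp_joinInl_joinInr (f : E × k × F →ᵃ[k] G) :
    joinLift (f.comp (joinInl k E F)) (f.comp (joinInr k E F)) = f := by
  ext ⟨x, t, y⟩
  have hinr : (f.comp (joinInr k E F)) 0 - (f.comp (joinInl k E F)) 0 = f.linear (0, 1, 0) := by
    rw [comp_apply, comp_apply, joinInl_apply, joinInr_apply, ← vsub_eq_sub, ← linearMap_vsub]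
    simp
  calc joinLift (f.comp (joinInl k E F)) (f.comp (joinInr k E F)) (x, t, y)
      = f.linear (x, 0, 0) + t • f.linear (0, 1, 0) + f.linear (0, 0, y) + f 0 := by
        rw [joinLift_apply, hinr]
        rfl
    _ = f.linear ((x, 0, 0) + t • (0, 1, 0) + (0, 0, y)) + f 0 := by
        simp only [map_add, map_smul]
    _ = f (x, t, y) := by
        simp [linear_apply_eq_sub]

variable (k E F G) in
def joinEquiv : (E × k × F →ᵃ[k] G) ≃ (E →ᵃ[k] G) × (F →ᵃ[k] G) where
  toFun f := (f.comp (joinInl k E F), f.comp (joinInr k E F))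
  invFun gh := joinLift gh.1 gh.2
  left_inv := joinLift_comp_joinInl_joinInr
  right_inv gh := by simp

theorem mapsTo_convexHull_iff [PartialOrder k] {s : Set E} {t : Set F} (f : E →ᵃ[k] F)
    (ht : Convex k t) : Set.MapsTo f (convexHull k s) t ↔ Set.MapsTo f s t := by
  simp only [Set.mapsTo_iff_subset_preimage, (ht.affine_preimage f).convexHull_subset_iff]

theorem mapsTo_convexHull_join_iff [PartialOrder k] {P : Set E} {Q : Set F} {R : Set G}
    (hR : Convex k R) (f : E × k × F →ᵃ[k] G) :
    Set.MapsTo f (convexHull k (joinInl k E F '' P ∪ joinInr k E F '' Q)) R ↔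
      Set.MapsTo (f.comp (joinInl k E F)) P R ∧ Set.MapsTo (f.comp (joinInr k E F)) Q R := by
  rw [mapsTo_convexHull_iff f hR, Set.mapsTo_union, Set.mapsTo_image_iff, Set.mapsTo_image_iff]
  rfl

end AffineMap

theorem hom_from_join_general
    {E F G : Type*} [AddCommGroup E] [Module ℝ E]
    [AddCommGroup F] [Module ℝ F]
    [AddCommGroup G] [Module ℝ G]
    (P : Set E) (Q : Set F) (R : Set G)
    (hR : ∃ SR : Finset G, R = convexHull ℝ (SR : Set G))
    (ιP : E →ᵃ[ℝ] E × ℝ × F) (hιP : ∀ x : E, ιP x = (x, (0 : ℝ), (0 : F)))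
    (ιQ : F →ᵃ[ℝ] E × ℝ × F) (hιQ : ∀ y : F, ιQ y = ((0 : E), (1 : ℝ), y)) :
    Set.BijOn (fun f : (E × ℝ × F) →ᵃ[ℝ] G => (f.comp ιP, f.comp ιQ))
      {f : (E × ℝ × F) →ᵃ[ℝ] G | ∀ z ∈ convexHull ℝ
          (((fun x : E => (x, (0 : ℝ), (0 : F))) '' P) ∪
           ((fun y : F => ((0 : E), (1 : ℝ), y)) '' Q)), f z ∈ R}
      ({f : E →ᵃ[ℝ] G | ∀ x ∈ P, f x ∈ R} ×ˢ {g : F →ᵃ[ℝ] G | ∀ y ∈ Q, g y ∈ R}) := by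
  obtain ⟨SR, rfl⟩ := hR
  obtain rfl : ιP = AffineMap.joinInl ℝ E F := AffineMap.ext hιP
  obtain rfl : ιQ = AffineMap.joinInr ℝ E F := AffineMap.ext hιQ
  exact (AffineMap.joinEquiv ℝ E F G).bijOn fun f =>
    (AffineMap.mapsTo_convexHull_join_iff (P := P) (Q := Q) (convex_convexHull ℝ _) f).symm

/-- For polytopes `P ⊆ E`, `Q ⊆ F` (nonempty, full-dimensional) and a polytope
`R ⊆ G`, the map `f ↦ (f ∘ ι_P, f ∘ ι_Q)` is a bijection from `Hom(join(P,Q), R)` onto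
`Hom(P,R) × Hom(Q,R)`, where `join(P,Q) ⊆ E × ℝ × F` is the convex hull of
`{(x,0,0) : x ∈ P} ∪ {(0,1,y) : y ∈ Q}`. -/
theorem hom_from_join
    {E F G : Type*} [AddCommGroup E] [Module ℝ E] [FiniteDimensional ℝ E]
    [AddCommGroup F] [Module ℝ F] [FiniteDimensional ℝ F]
    [AddCommGroup G] [Module ℝ G] [FiniteDimensional ℝ G]
    (P : Set E) (Q : Set F) (R : Set G)
    (hP : ∃ SP : Finset E, P = convexHull ℝ (SP : Set E)) (hPne : P.Nonempty)
    (hPspan : affineSpan ℝ P = ⊤)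
    (hQ : ∃ SQ : Finset F, Q = convexHull ℝ (SQ : Set F)) (hQne : Q.Nonempty)
    (hQspan : affineSpan ℝ Q = ⊤)
    (hR : ∃ SR : Finset G, R = convexHull ℝ (SR : Set G))
    (ιP : E →ᵃ[ℝ] E × ℝ × F) (hιP : ∀ x : E, ιP x = (x, (0 : ℝ), (0 : F)))
    (ιQ : F →ᵃ[ℝ] E × ℝ × F) (hιQ : ∀ y : F, ιQ y = ((0 : E), (1 : ℝ), y)) :
    Set.BijOn (fun f : (E × ℝ × F) →ᵃ[ℝ] G => (f.comp ιP, f.comp ιQ))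
      {f : (E × ℝ × F) →ᵃ[ℝ] G | ∀ z ∈ convexHull ℝ
          (((fun x : E => (x, (0 : ℝ), (0 : F))) '' P) ∪
           ((fun y : F => ((0 : E), (1 : ℝ), y)) '' Q)), f z ∈ R}
      ({f : E →ᵃ[ℝ] G | ∀ x ∈ P, f x ∈ R} ×ˢ {g : F →ᵃ[ℝ] G | ∀ y ∈ Q, g y ∈ R}) :=
  hom_from_join_general P Q R hR ιP hιP ιQ hιQ
end

section
/- Let E and F be finite-dimensional real vector spaces and let C₁ ⊆ E, C₂ ⊆ F be pointed polyhedral cones, i.e. each Cᵢ is the set of nonnegative linear combinations of a finite set of vectors and satisfies Cᵢ ∩ (−Cᵢ) = {0}. Define C₁⊗C₂ ⊆ E ⊗ F as the set of nonnegative linear combinations of pure tensors x ⊗ y with x ∈ C₁, y ∈ C₂. Then: (a) for all nonzero x ∈ C₁ and nonzero y ∈ C₂, if ℝ≥0·x is an extremal ray of C₁ and ℝ≥0·y is an extremal ray of C₂, then ℝ≥0·(x ⊗ y) is an extremal ray of C₁⊗C₂; and (b) conversely, for every nonzero z ∈ C₁⊗C₂ such that ℝ≥0·z is an extreme subset of C₁⊗C₂,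 there exist nonzero x ∈ C₁ and y ∈ C₂ such that z = x ⊗ y and ℝ≥0·x, ℝ≥0·y are extremal rays of C₁ and C₂ respectively. -/
/-!
We work with Mathlib's pointed cones: `C₁` and `C₂` are cone hulls of finite sets, `T` is
`minTensorProduct C₁ C₂`, the ray through `x` is `hull ℝ {x}`, and over an ordered field a
subcone is an extreme subset exactly when it is a face.

The key fact is that a face of a cone hull is the hull of the generators it contains.

(a) A salient finitely generated cone has a linear functional that is positive on its nonzero
elements: separate `0` from the convex hull of the nonzero generators. Take such `f` on `C₁` and
`g` on `C₂`. The `u ∈ T` whose contractions `(f ⊗ id) u` and `(id ⊗ g) u` lie on the rays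
through `y` and `x` form a face of `T`, since they are cut out by preimages of faces. A generator
`p ⊗ q` of this face has `p` on the ray through `x` and `q` on the ray through `y`, so the face
is the ray through `x ⊗ y`.

(b) A nonzero extremal ray of `T` must contain a nonzero generator, so `z = x ⊗ y`. Pulling the
face back along the injective maps `· ⊗ y` and `x ⊗ ·` shows that the rays through `x` and `y`
are faces of `C₁` and `C₂`.
-/

open Function Set TensorProduct

namespace PointedCone

section OrderedSemiring

variable {R M : Type*} [Semiring R] [PartialOrder R] [IsOrderedRing R] [AddCommGroup M]
  [Module R M] {s : Set M} {F C C' : PointedCone R M}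

theorem IsFaceOf.mono (hF : F.IsFaceOf C) (hFC' : F ≤ C') (hC' : C' ≤ C) : F.IsFaceOf C' :=
  ⟨hFC', fun hx hy ha h => hF.mem_of_smul_add_mem (hC' hx) (hC' hy) ha h⟩

theorem IsFaceOf.inf_of_le (hF : F.IsFaceOf C) (hC' : C' ≤ C) : (F ⊓ C').IsFaceOf C' :=
  ⟨inf_le_right, fun hx hy ha h => ⟨hF.mem_of_smul_add_mem (hC' hx) (hC' hy) ha h.1, hx⟩⟩

theorem IsFaceOf.eq_hull_inter (hF : F.IsFaceOf (hull R s)) : F = hull R (s ∩ F) := by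
  refine le_antisymm (fun x hx => ?_) (Submodule.span_le.2 fun x hx => hx.2)
  have hxs := hF.le hx
  induction hxs using Submodule.span_induction with
  | mem x hx' => exact subset_hull ⟨hx', hx⟩
  | zero => exact zero_mem _
  | add x y hx' hy' ihx ihy =>
    exact add_mem (ihx (hF.mem_of_add_mem_left hx' hy' hx))
      (ihy (hF.mem_of_add_mem_right hx' hy' hx))
  | smul c x hx' ih =>
    rcases c.2.eq_or_lt with hc | hc
    · simp [show c = 0 from Subtype.ext hc.symm]
    · exact Submodule.smul_mem _ c
        (ih (hF.mem_of_smul_add_mem hx' (zero_mem _) hc (by simpa using hx)))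

theorem coe_hull_finset (S : Finset M) :
    (hull R (S : Set M) : Set M) = {x | ∃ c : M → R, (∀ v, 0 ≤ c v) ∧ x = ∑ v ∈ S, c v • v} := by
  ext x
  refine ⟨fun hx => ?_, ?_⟩
  · obtain ⟨c, -, rfl⟩ := Submodule.mem_span_finset.1 hx
    exact ⟨fun v => c v, fun v => (c v).2, by simp [Nonneg.coe_smul]⟩
  · rintro ⟨c, hc, rfl⟩
    exact sum_mem fun v hv => smul_mem _ (hc v) (subset_hull hv)

end OrderedSemiring

section Field

variable {𝕜 M N : Type*} [Field 𝕜] [LinearOrder 𝕜] [IsStrictOrderedRing 𝕜]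
  [AddCommGroup M] [Module 𝕜 M] [AddCommGroup N] [Module 𝕜 N]

theorem mem_hull_singleton {x w : M} : w ∈ hull 𝕜 {x} ↔ ∃ t : 𝕜, 0 ≤ t ∧ w = t • x := by
  rw [Submodule.mem_span_singleton]
  constructor
  · rintro ⟨t, rfl⟩
    exact ⟨t, t.2, rfl⟩
  · rintro ⟨t, ht, rfl⟩
    exact ⟨⟨t, ht⟩, rfl⟩

theorem coe_hull_singleton (x : M) :
    (hull 𝕜 {x} : Set M) = {w | ∃ t : 𝕜, 0 ≤ t ∧ w = t • x} :=
  Set.ext fun _ => mem_hull_singleton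

theorem isFaceOf_iff_isExtreme {F C : PointedCone 𝕜 M} :
    F.IsFaceOf C ↔ IsExtreme 𝕜 (C : Set M) F := by
  refine ⟨IsFaceOf.isExtreme, fun h => .of_mem_of_add_mem_left h.1 fun {x y} hx hy hxy => ?_⟩
  -- `x + y` is the midpoint of `2 • x` and `2 • y`
  have h2x : (2 : 𝕜) • x ∈ F := h.2 (C.smul_mem zero_le_two hx) (C.smul_mem zero_le_two hy) hxy
    ⟨2⁻¹, 2⁻¹, by positivity, by positivity, by ring, by simp [smul_smul]⟩
  simpa [smul_smul] using F.smul_mem (inv_nonneg.2 zero_le_two) h2x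

theorem comap_hull_singleton {f : M →ₗ[𝕜] N} (hf : Injective f) (x : M) :
    (hull 𝕜 {f x}).comap f = hull 𝕜 {x} := by
  ext w
  simp only [mem_comap, mem_hull_singleton, ← map_smul, hf.eq_iff]

theorem convex_sdiff_zero {C : PointedCone 𝕜 M} (hC : (C : Set M) ∩ -C = {0}) :
    Convex 𝕜 ((C : Set M) \ {0}) := by
  have : IsExtreme 𝕜 (C : Set M) {0} := by simpa [hC] using (IsFaceOf.lineal C).isExtreme
  exact this.convex_sdiff C.convex

theorem pos_of_mem_hull {s : Set M} {f : M →ₗ[𝕜] 𝕜} (hf : ∀ x ∈ s, x ≠ 0 → 0 < f x) {x : M}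
    (hx : x ∈ hull 𝕜 s) (hx0 : x ≠ 0) : 0 < f x := by
  induction hx using Submodule.span_induction with
  | mem x hx => exact hf x hx hx0
  | zero => exact absurd rfl hx0
  | add x y _ _ ihx ihy =>
    rcases eq_or_ne x 0 with rfl | hx
    · simpa using ihy (by simpa using hx0)
    rcases eq_or_ne y 0 with rfl | hy
    · simpa using ihx hx
    simpa using add_pos (ihx hx) (ihy hy)
  | smul c x _ ih =>
    obtain ⟨hc, hx⟩ := smul_ne_zero_iff.1 hx0
    have hc' : (0 : 𝕜) < c := lt_of_le_of_ne c.2 (fun h => hc (Subtype.ext h.symm))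
    rw [LinearMap.map_smul_of_tower, ← Nonneg.coe_smul, smul_eq_mul]
    exact mul_pos hc' (ih hx)

end Field

end PointedCone

section Real

variable {E : Type*} [AddCommGroup E] [Module ℝ E] [FiniteDimensional ℝ E]

theorem exists_pos_of_zero_notMem_convexHull {s : Set E} (hs : s.Finite)
    (h0 : (0 : E) ∉ convexHull ℝ s) : ∃ f : E →ₗ[ℝ] ℝ, ∀ x ∈ s, 0 < f x := by
  -- `E` carries no topology, so the separation is done in coordinates
  let e := (Module.finBasis ℝ E).equivFun
  have h0' : (0 : Fin _ → ℝ) ∉ convexHull ℝ (e.toLinearMap '' s) := by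
    rw [← LinearMap.image_convexHull]
    rintro ⟨x, hx, hx0⟩
    rw [LinearEquiv.coe_coe, e.map_eq_zero_iff] at hx0
    exact h0 (hx0 ▸ hx)
  obtain ⟨f, u, hf0, hfs⟩ := geometric_hahn_banach_point_closed (convex_convexHull ℝ _)
    ((hs.image _).isCompact_convexHull (𝕜 := ℝ)).isClosed h0'
  refine ⟨f.toLinearMap ∘ₗ e.toLinearMap, fun x hx => ?_⟩
  rw [map_zero] at hf0
  exact hf0.trans (hfs _ (subset_convexHull ℝ _ (mem_image_of_mem _ hx)))

theorem PointedCone.exists_pos_of_hull_salient {s : Set E} (hs : s.Finite)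
    (hC : (hull ℝ s : Set E) ∩ -(hull ℝ s : Set E) = {0}) :
    ∃ f : E →ₗ[ℝ] ℝ, ∀ x ∈ hull ℝ s, x ≠ 0 → 0 < f x := by
  have h0 : (0 : E) ∉ convexHull ℝ (s \ {0}) := fun h =>
    (convexHull_min (sdiff_subset_sdiff_left subset_hull) (convex_sdiff_zero hC) h).2 rfl
  obtain ⟨f, hf⟩ := exists_pos_of_zero_notMem_convexHull (hs.sdiff) h0
  exact ⟨f, fun x hx hx0 => pos_of_mem_hull (fun y hy hy0 => hf y ⟨hy, hy0⟩) hx hx0⟩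

end Real

namespace TensorProduct

variable {𝕜 M N : Type*} [Field 𝕜] [AddCommGroup M] [Module 𝕜 M] [AddCommGroup N] [Module 𝕜 N]

theorem mk_flip_injective {y : N} (hy : y ≠ 0) : Injective ((TensorProduct.mk 𝕜 M N).flip y) := by
  obtain ⟨g, hg⟩ := Module.Projective.exists_dual_eq_one 𝕜 hy
  exact HasLeftInverse.injective ⟨TensorProduct.rid 𝕜 M ∘ₗ g.lTensor M, fun a => by simp [hg]⟩

theorem mk_injective {x : M} (hx : x ≠ 0) : Injective (TensorProduct.mk 𝕜 M N x) := by
  obtain ⟨f, hf⟩ := Module.Projective.exists_dual_eq_one 𝕜 hx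
  exact HasLeftInverse.injective ⟨TensorProduct.lid 𝕜 N ∘ₗ f.rTensor N, fun a => by simp [hf]⟩

end TensorProduct

namespace PointedCone

section Tensor

variable {𝕜 M N : Type*} [Field 𝕜] [LinearOrder 𝕜] [IsStrictOrderedRing 𝕜]
  [AddCommGroup M] [Module 𝕜 M] [AddCommGroup N] [Module 𝕜 N]
  {C₁ : PointedCone 𝕜 M} {C₂ : PointedCone 𝕜 N}

theorem coe_minTensorProduct (C₁ : PointedCone 𝕜 M) (C₂ : PointedCone 𝕜 N) :
    (minTensorProduct C₁ C₂ : Set (M ⊗[𝕜] N)) =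
      {z | ∃ (k : ℕ) (x : Fin k → M) (y : Fin k → N) (c : Fin k → 𝕜),
        (∀ i, x i ∈ C₁) ∧ (∀ i, y i ∈ C₂) ∧ (∀ i, 0 ≤ c i) ∧ z = ∑ i, c i • (x i ⊗ₜ[𝕜] y i)} := by
  ext z
  refine ⟨fun hz => ?_, ?_⟩
  · obtain ⟨k, c, w, rfl⟩ := Submodule.mem_span_set'.1 hz
    choose x hx y hy hxy using fun i => (w i).2
    exact ⟨k, x, y, fun i => c i, hx, hy, fun i => (c i).2, by simp [hxy, Nonneg.coe_smul]⟩
  · rintro ⟨k, x, y, c, hx, hy, hc, rfl⟩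
    exact sum_mem fun i _ => smul_mem _ (hc i) (tmul_mem_minTensorProduct (hx i) (hy i))

theorem tmul_mem_hull_tmul {x p : M} {y q : N} (hp : p ∈ hull 𝕜 {x}) (hq : q ∈ hull 𝕜 {y}) :
    p ⊗ₜ[𝕜] q ∈ hull 𝕜 {x ⊗ₜ[𝕜] y} := by
  obtain ⟨a, ha, rfl⟩ := mem_hull_singleton.1 hp
  obtain ⟨b, hb, rfl⟩ := mem_hull_singleton.1 hq
  exact mem_hull_singleton.2 ⟨a * b, mul_nonneg ha hb, by rw [smul_tmul_smul]⟩

theorem minTensorProduct_le_comap_lid_rTensor {f : M →ₗ[𝕜] 𝕜} (hf : ∀ p ∈ C₁, 0 ≤ f p) :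
    minTensorProduct C₁ C₂ ≤ C₂.comap (TensorProduct.lid 𝕜 N ∘ₗ f.rTensor N) :=
  Submodule.span_le.2 <| by
    rintro _ ⟨p, hp, q, hq, rfl⟩
    simpa using C₂.smul_mem (hf p hp) hq

theorem minTensorProduct_le_comap_rid_lTensor {g : N →ₗ[𝕜] 𝕜} (hg : ∀ q ∈ C₂, 0 ≤ g q) :
    minTensorProduct C₁ C₂ ≤ C₁.comap (TensorProduct.rid 𝕜 M ∘ₗ g.lTensor M) :=
  Submodule.span_le.2 <| by
    rintro _ ⟨p, hp, q, hq, rfl⟩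
    simpa using C₁.smul_mem (hg q hq) hp

theorem IsFaceOf.hull_tmul {x : M} {y : N} {f : M →ₗ[𝕜] 𝕜} {g : N →ₗ[𝕜] 𝕜}
    (hx : (hull 𝕜 {x}).IsFaceOf C₁) (hy : (hull 𝕜 {y}).IsFaceOf C₂)
    (hf : ∀ p ∈ C₁, p ≠ 0 → 0 < f p) (hg : ∀ q ∈ C₂, q ≠ 0 → 0 < g q) :
    (hull 𝕜 {x ⊗ₜ[𝕜] y}).IsFaceOf (minTensorProduct C₁ C₂) := by
  set φ : M ⊗[𝕜] N →ₗ[𝕜] N := TensorProduct.lid 𝕜 N ∘ₗ f.rTensor N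
  set ψ : M ⊗[𝕜] N →ₗ[𝕜] M := TensorProduct.rid 𝕜 M ∘ₗ g.lTensor M
  have hf' : ∀ p ∈ C₁, 0 ≤ f p := fun p hp =>
    (eq_or_ne p 0).elim (fun h => h ▸ (map_zero f).ge) fun h => (hf p hp h).le
  have hg' : ∀ q ∈ C₂, 0 ≤ g q := fun q hq =>
    (eq_or_ne q 0).elim (fun h => h ▸ (map_zero g).ge) fun h => (hg q hq h).le
  set G := ((hull 𝕜 {y}).comap φ ⊓ minTensorProduct C₁ C₂) ⊓
    ((hull 𝕜 {x}).comap ψ ⊓ minTensorProduct C₁ C₂)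
  have hG : G.IsFaceOf (minTensorProduct C₁ C₂) := IsFaceOf.inf_left
    ((hy.comap φ).inf_of_le (minTensorProduct_le_comap_lid_rTensor hf'))
    ((hx.comap ψ).inf_of_le (minTensorProduct_le_comap_rid_lTensor hg'))
  suffices G = hull 𝕜 {x ⊗ₜ[𝕜] y} from this ▸ hG
  refine le_antisymm ?_ ?_
  · rw [hG.eq_hull_inter]
    refine Submodule.span_le.2 ?_
    rintro _ ⟨⟨p, hp, q, hq, rfl⟩, ⟨hφpq, -⟩, ⟨hψpq, -⟩⟩
    rcases eq_or_ne p 0 with rfl | hp0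
    · simp
    rcases eq_or_ne q 0 with rfl | hq0
    · simp
    replace hφpq : f p • q ∈ hull 𝕜 {y} := by simpa [φ] using hφpq
    replace hψpq : g q • p ∈ hull 𝕜 {x} := by simpa [ψ] using hψpq
    exact tmul_mem_hull_tmul ((smul_mem_iff _ (hg q hq hq0)).1 hψpq)
      ((smul_mem_iff _ (hf p hp hp0)).1 hφpq)
  · have hx₁ : x ∈ C₁ := hx.le (subset_hull rfl)
    have hy₂ : y ∈ C₂ := hy.le (subset_hull rfl)
    have hxy := tmul_mem_minTensorProduct hx₁ hy₂
    refine Submodule.span_le.2 (singleton_subset_iff.2 ⟨⟨?_, hxy⟩, ?_, hxy⟩)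
    · simpa [φ] using smul_mem _ (hf' x hx₁) (subset_hull rfl : y ∈ hull 𝕜 {y})
    · simpa [ψ] using smul_mem _ (hg' y hy₂) (subset_hull rfl : x ∈ hull 𝕜 {x})

theorem IsFaceOf.exists_eq_tmul_of_hull {z : M ⊗[𝕜] N}
    (h : (hull 𝕜 {z}).IsFaceOf (minTensorProduct C₁ C₂)) (hz : z ≠ 0) :
    ∃ x ∈ C₁, ∃ y ∈ C₂, z = x ⊗ₜ[𝕜] y := by
  obtain ⟨_, ⟨⟨p, hp, q, hq, rfl⟩, hpq⟩, hpq0⟩ :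
      ∃ w ∈ image2 (· ⊗ₜ[𝕜] ·) (C₁ : Set M) (C₂ : Set N) ∩ (hull 𝕜 {z} : Set _), w ≠ 0 := by
    by_contra! h0
    have hbot := h.eq_hull_inter
    rw [show hull 𝕜 _ = ⊥ from Submodule.span_eq_bot.2 h0] at hbot
    exact hz (by simpa [hbot] using (subset_hull rfl : z ∈ hull 𝕜 {z}))
  dsimp only at hpq hpq0
  obtain ⟨t, ht, hpqt⟩ := mem_hull_singleton.1 hpq
  have ht0 : t ≠ 0 := by
    rintro rfl
    exact hpq0 (by simpa using hpqt)
  refine ⟨t⁻¹ • p, C₁.smul_mem (inv_nonneg.2 ht) hp, q, hq, ?_⟩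
  rw [← smul_tmul', hpqt, inv_smul_smul₀ ht0]

theorem IsFaceOf.left_of_hull_tmul {x : M} {y : N}
    (h : (hull 𝕜 {x ⊗ₜ[𝕜] y}).IsFaceOf (minTensorProduct C₁ C₂)) (hx : x ∈ C₁) (hy : y ∈ C₂)
    (hy0 : y ≠ 0) : (hull 𝕜 {x}).IsFaceOf C₁ := by
  have h' := h.comap ((TensorProduct.mk 𝕜 M N).flip y)
  rw [show x ⊗ₜ[𝕜] y = (TensorProduct.mk 𝕜 M N).flip y x from rfl,
    comap_hull_singleton (TensorProduct.mk_flip_injective hy0)] at h'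
  exact h'.mono (Submodule.span_le.2 (singleton_subset_iff.2 hx))
    fun p hp => tmul_mem_minTensorProduct hp hy

theorem IsFaceOf.right_of_hull_tmul {x : M} {y : N}
    (h : (hull 𝕜 {x ⊗ₜ[𝕜] y}).IsFaceOf (minTensorProduct C₁ C₂)) (hx : x ∈ C₁) (hy : y ∈ C₂)
    (hx0 : x ≠ 0) : (hull 𝕜 {y}).IsFaceOf C₂ := by
  have h' := h.comap (TensorProduct.mk 𝕜 M N x)
  rw [show x ⊗ₜ[𝕜] y = TensorProduct.mk 𝕜 M N x y from rfl,
    comap_hull_singleton (TensorProduct.mk_injective hx0)] at h'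
  exact h'.mono (Submodule.span_le.2 (singleton_subset_iff.2 hy))
    fun q hq => tmul_mem_minTensorProduct hx hq

end Tensor

end PointedCone

/-- For pointed polyhedral cones `C₁ ⊆ E`, `C₂ ⊆ F`, the extremal rays of the
tensor product cone `C₁ ⊗ C₂ ⊆ E ⊗ F` are exactly the rays spanned by pure tensors `x ⊗ y`
of extremal generators of `C₁` and `C₂`. -/
theorem tensor_cone_extremal_rays
    {E F : Type*} [AddCommGroup E] [Module ℝ E] [FiniteDimensional ℝ E]
    [AddCommGroup F] [Module ℝ F] [FiniteDimensional ℝ F]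
    (C₁ : Set E) (C₂ : Set F)
    (hC₁ : ∃ S : Finset E, C₁ = {x : E | ∃ c : E → ℝ, (∀ v, 0 ≤ c v) ∧ x = ∑ v ∈ S, c v • v})
    (hC₂ : ∃ S : Finset F, C₂ = {y : F | ∃ c : F → ℝ, (∀ v, 0 ≤ c v) ∧ y = ∑ v ∈ S, c v • v})
    (hC₁pointed : C₁ ∩ (-C₁) = {0})
    (hC₂pointed : C₂ ∩ (-C₂) = {0})
    (T : Set (E ⊗[ℝ] F))
    (hT : T = {z : E ⊗[ℝ] F | ∃ (k : ℕ) (x : Fin k → E) (y : Fin k → F) (c : Fin k → ℝ),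
      (∀ i, x i ∈ C₁) ∧ (∀ i, y i ∈ C₂) ∧ (∀ i, 0 ≤ c i) ∧
      z = ∑ i, c i • (x i ⊗ₜ[ℝ] y i)}) :
    -- (a)
    (∀ x ∈ C₁, ∀ y ∈ C₂, x ≠ 0 → y ≠ 0 →
      IsExtreme ℝ C₁ {w : E | ∃ t : ℝ, 0 ≤ t ∧ w = t • x} →
      IsExtreme ℝ C₂ {w : F | ∃ t : ℝ, 0 ≤ t ∧ w = t • y} →
      IsExtreme ℝ T {w : E ⊗[ℝ] F | ∃ t : ℝ, 0 ≤ t ∧ w = t • (x ⊗ₜ[ℝ] y)}) ∧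
    -- (b)
    (∀ z ∈ T, z ≠ 0 →
      IsExtreme ℝ T {w : E ⊗[ℝ] F | ∃ t : ℝ, 0 ≤ t ∧ w = t • z} →
      ∃ x ∈ C₁, ∃ y ∈ C₂, x ≠ 0 ∧ y ≠ 0 ∧ z = x ⊗ₜ[ℝ] y ∧
        IsExtreme ℝ C₁ {w : E | ∃ t : ℝ, 0 ≤ t ∧ w = t • x} ∧
        IsExtreme ℝ C₂ {w : F | ∃ t : ℝ, 0 ≤ t ∧ w = t • y}) := by
  obtain ⟨S₁, hS₁⟩ := hC₁
  obtain ⟨S₂, hS₂⟩ := hC₂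
  rw [← PointedCone.coe_hull_finset] at hS₁ hS₂
  subst hS₁ hS₂
  simp only [SetLike.mem_coe, ← PointedCone.coe_minTensorProduct] at hT
  subst hT
  simp only [← PointedCone.coe_hull_singleton, ← PointedCone.isFaceOf_iff_isExtreme,
    SetLike.mem_coe]
  obtain ⟨f, hf⟩ := PointedCone.exists_pos_of_hull_salient S₁.finite_toSet hC₁pointed
  obtain ⟨g, hg⟩ := PointedCone.exists_pos_of_hull_salient S₂.finite_toSet hC₂pointed
  refine ⟨fun x _ y _ _ _ hx hy => hx.hull_tmul hy hf hg, fun z _ hz0 hz => ?_⟩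
  obtain ⟨x, hx, y, hy, rfl⟩ := hz.exists_eq_tmul_of_hull hz0
  have hx0 : x ≠ 0 := by
    rintro rfl
    exact hz0 (zero_tmul _ _)
  have hy0 : y ≠ 0 := by
    rintro rfl
    exact hz0 (tmul_zero _ _)
  exact ⟨x, hx, y, hy, hx0, hy0, rfl, hz.left_of_hull_tmul hx hy hy0,
    hz.right_of_hull_tmul hx hy hx0⟩
end

section
/- Let E and F be finite-dimensional real vector spaces and let P ⊆ E, Q ⊆ F be nonempty polytopes. Define the tensor product polytope P⊗Q ⊆ (E ⊗ F) × E × F as the convex hull of {(x ⊗ y, x, y) : x ∈ P, y ∈ Q}. Then the set of extreme points of P⊗Q equals {(v ⊗ w, v, w) : v an extreme point of P, w an extreme point of Q}. -/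
open TensorProduct

/-!
For a bilinear map `B`, project the hull of `{(B x y, x, y)}` onto `(x, y)`. Over an extreme point
`(v, w)` of `P × Q` the hull meets the fiber only in `(B v w, v, w)`, because deleting the rest of
that fiber from the preimage of `P × Q` leaves a convex set that still contains the generators;
so `(B v w, v, w)` is extreme. Conversely, an extreme point of the hull is a generator
`(B a b, a, b)`, and `x ↦ (B x b, x, b)` is an injective affine map of `P` into the hull, so
extremality of `a` in `P` pulls back along it (likewise for `b`).
-/

section Extreme

variable {𝕜 M N : Type*} [Ring 𝕜] [PartialOrder 𝕜] [IsOrderedRing 𝕜]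
  [AddCommGroup M] [Module 𝕜 M] [AddCommGroup N] [Module 𝕜 N]

theorem mem_extremePoints_of_mapsTo {f : M →ᵃ[𝕜] N} {s : Set M} {t : Set N}
    (hst : Set.MapsTo f s t) {x : M} (hx : x ∈ s) (hfx : f x ∈ t.extremePoints 𝕜)
    (hfib : ∀ y ∈ s, f y = f x → y = x) : x ∈ s.extremePoints 𝕜 := by
  refine mem_extremePoints.2 ⟨hx, fun y₁ hy₁ y₂ hy₂ hxy ↦ ?_⟩
  have hfxy : f x ∈ openSegment 𝕜 (f y₁) (f y₂) := by
    rw [← image_openSegment]; exact ⟨x, hxy, rfl⟩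
  obtain ⟨h₁, h₂⟩ := (mem_extremePoints.1 hfx).2 _ (hst hy₁) _ (hst hy₂) hfxy
  exact ⟨hfib y₁ hy₁ h₁, hfib y₂ hy₂ h₂⟩

theorem Convex.affine_preimage_sdiff_fiber {K : Set N} (hK : Convex 𝕜 K) {x : N}
    (hx : x ∈ K.extremePoints 𝕜) (f : M →ᵃ[𝕜] N) (y : M) :
    Convex 𝕜 (f ⁻¹' K \ (f ⁻¹' {x} \ {y})) := by
  refine convex_iff_openSegment_subset.2 fun z₁ hz₁ z₂ hz₂ z hz ↦ ?_
  have hfz : f z ∈ openSegment 𝕜 (f z₁) (f z₂) := by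
    rw [← image_openSegment]; exact ⟨z, hz, rfl⟩
  refine ⟨hK.openSegment_subset hz₁.1 hz₂.1 hfz, fun ⟨hzx, hzy⟩ ↦ hzy ?_⟩
  obtain ⟨h₁, h₂⟩ := (mem_extremePoints.1 hx).2 _ hz₁.1 _ hz₂.1 (hzx ▸ hfz)
  have hz₁y : z₁ = y := by simpa [h₁] using hz₁.2
  have hz₂y : z₂ = y := by simpa [h₂] using hz₂.2
  rw [hz₁y, hz₂y] at hz
  exact (convex_singleton y).openSegment_subset rfl rfl hz

end Extreme

section LiftedProd

variable {𝕜 E F G : Type*} [Field 𝕜]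
  [AddCommGroup E] [Module 𝕜 E] [AddCommGroup F] [Module 𝕜 F] [AddCommGroup G] [Module 𝕜 G]
  (B : E →ₗ[𝕜] F →ₗ[𝕜] G) {P : Set E} {Q : Set F}

def liftedProd (P : Set E) (Q : Set F) : Set (G × E × F) :=
  {p | ∃ x ∈ P, ∃ y ∈ Q, p = (B x y, x, y)}

theorem mk_mem_liftedProd {x : E} {y : F} (hx : x ∈ P) (hy : y ∈ Q) :
    (B x y, x, y) ∈ liftedProd B P Q :=
  ⟨x, hx, y, hy, rfl⟩

variable [LinearOrder 𝕜] [IsStrictOrderedRing 𝕜]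

theorem mem_extremePoints_left_of_mem_extremePoints_convexHull_liftedProd {a : E} {b : F}
    (ha : a ∈ P) (hb : b ∈ Q)
    (h : (B a b, a, b) ∈ (convexHull 𝕜 (liftedProd B P Q)).extremePoints 𝕜) :
    a ∈ P.extremePoints 𝕜 := by
  let g : E →ᵃ[𝕜] G × E × F :=
    ⟨fun x ↦ (B x b, x, b), (B.flip b).prod (LinearMap.inl 𝕜 E F), fun x v ↦ by simp⟩
  exact mem_extremePoints_of_mapsTo (f := g)
    (fun x hx ↦ subset_convexHull 𝕜 _ (mk_mem_liftedProd B hx hb))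
    ha h fun x _ hx ↦ congrArg (·.2.1) hx

theorem mem_extremePoints_right_of_mem_extremePoints_convexHull_liftedProd {a : E} {b : F}
    (ha : a ∈ P) (hb : b ∈ Q)
    (h : (B a b, a, b) ∈ (convexHull 𝕜 (liftedProd B P Q)).extremePoints 𝕜) :
    b ∈ Q.extremePoints 𝕜 := by
  let g : F →ᵃ[𝕜] G × E × F :=
    ⟨fun y ↦ (B a y, a, y), (B a).prod (LinearMap.inr 𝕜 E F), fun y v ↦ by simp⟩
  exact mem_extremePoints_of_mapsTo (f := g)
    (fun y hy ↦ subset_convexHull 𝕜 _ (mk_mem_liftedProd B ha hy))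
    hb h fun y _ hy ↦ congrArg (·.2.2) hy

theorem mem_extremePoints_convexHull_liftedProd (hP : Convex 𝕜 P) (hQ : Convex 𝕜 Q) {v : E}
    {w : F} (hv : v ∈ P.extremePoints 𝕜) (hw : w ∈ Q.extremePoints 𝕜) :
    (B v w, v, w) ∈ (convexHull 𝕜 (liftedProd B P Q)).extremePoints 𝕜 := by
  let π : G × E × F →ᵃ[𝕜] E × F := AffineMap.snd
  have hvw : (v, w) ∈ (P ×ˢ Q).extremePoints 𝕜 := by
    rw [extremePoints_prod]
    exact ⟨hv, hw⟩
  have hH : convexHull 𝕜 (liftedProd B P Q) ⊆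
      π ⁻¹' (P ×ˢ Q) \ (π ⁻¹' {(v, w)} \ {(B v w, v, w)}) := by
    refine convexHull_min ?_ ((hP.prod hQ).affine_preimage_sdiff_fiber hvw π _)
    rintro _ ⟨x, hx, y, hy, rfl⟩
    refine ⟨⟨hx, hy⟩, fun ⟨hxy, hne⟩ ↦ hne ?_⟩
    obtain ⟨rfl, rfl⟩ : x = v ∧ y = w := by simpa [π] using hxy
    rfl
  exact mem_extremePoints_of_mapsTo (fun z hz ↦ (hH hz).1)
    (subset_convexHull 𝕜 _ (mk_mem_liftedProd B hv.1 hw.1)) hvw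
    fun z hz hzvw ↦ by_contra fun hne ↦ (hH hz).2 ⟨hzvw, hne⟩

theorem extremePoints_convexHull_liftedProd (hP : Convex 𝕜 P) (hQ : Convex 𝕜 Q) :
    (convexHull 𝕜 (liftedProd B P Q)).extremePoints 𝕜 =
      liftedProd B (P.extremePoints 𝕜) (Q.extremePoints 𝕜) := by
  ext p
  constructor
  · intro hp
    obtain ⟨a, ha, b, hb, rfl⟩ := extremePoints_convexHull_subset hp
    exact ⟨a, mem_extremePoints_left_of_mem_extremePoints_convexHull_liftedProd B ha hb hp,
      b, mem_extremePoints_right_of_mem_extremePoints_convexHull_liftedProd B ha hb hp, rfl⟩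
  · rintro ⟨v, hv, w, hw, rfl⟩
    exact mem_extremePoints_convexHull_liftedProd B hP hQ hv hw

end LiftedProd

theorem tensor_polytope_extremePoints_general
    {E F : Type*} [AddCommGroup E] [Module ℝ E]
    [AddCommGroup F] [Module ℝ F]
    (P : Set E) (Q : Set F)
    (hP : ∃ SP : Finset E, P = convexHull ℝ (SP : Set E))
    (hQ : ∃ SQ : Finset F, Q = convexHull ℝ (SQ : Set F)) :
    Set.extremePoints ℝ
        (convexHull ℝ {p : (E ⊗[ℝ] F) × E × F | ∃ x ∈ P, ∃ y ∈ Q, p = (x ⊗ₜ[ℝ] y, x, y)}) =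
      {p : (E ⊗[ℝ] F) × E × F |
        ∃ v ∈ Set.extremePoints ℝ P, ∃ w ∈ Set.extremePoints ℝ Q, p = (v ⊗ₜ[ℝ] w, v, w)} := by
  obtain ⟨SP, rfl⟩ := hP
  obtain ⟨SQ, rfl⟩ := hQ
  exact extremePoints_convexHull_liftedProd (TensorProduct.mk ℝ E F)
    (convex_convexHull ℝ _) (convex_convexHull ℝ _)

/-- The extreme points of the tensor product polytope
`P⊗Q = conv{(x ⊗ y, x, y) : x ∈ P, y ∈ Q} ⊆ (E ⊗ F) × E × F` are exactly the points
`(v ⊗ w, v, w)` with `v` an extreme point of `P` and `w` an extreme point of `Q`. -/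
theorem tensor_polytope_extremePoints
    {E F : Type*} [AddCommGroup E] [Module ℝ E] [FiniteDimensional ℝ E]
    [AddCommGroup F] [Module ℝ F] [FiniteDimensional ℝ F]
    (P : Set E) (Q : Set F)
    (hP : ∃ SP : Finset E, P = convexHull ℝ (SP : Set E)) (hPne : P.Nonempty)
    (hQ : ∃ SQ : Finset F, Q = convexHull ℝ (SQ : Set F)) (hQne : Q.Nonempty) :
    Set.extremePoints ℝ
        (convexHull ℝ {p : (E ⊗[ℝ] F) × E × F | ∃ x ∈ P, ∃ y ∈ Q, p = (x ⊗ₜ[ℝ] y, x, y)}) =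
      {p : (E ⊗[ℝ] F) × E × F |
        ∃ v ∈ Set.extremePoints ℝ P, ∃ w ∈ Set.extremePoints ℝ Q, p = (v ⊗ₜ[ℝ] w, v, w)} :=
  tensor_polytope_extremePoints_general P Q hP hQ
end

section
/- Let E and F be finite-dimensional real vector spaces and let P ⊆ E, Q ⊆ F be nonempty polytopes. Define the tensor product polytope P⊗Q ⊆ (E ⊗ F) × E × F as the convex hull of {(x ⊗ y, x, y) : x ∈ P, y ∈ Q}. Then dim(P⊗Q) = (dim P)·(dim Q) + dim P + dim Q, where the dimension of a nonempty convex set is the rank over ℝ of its vector span. -/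
/-!
Pick `x₀ ∈ P`, `y₀ ∈ Q`. The vector span of `P ⊗ Q` is spanned by the differences
`(x ⊗ y - x₀ ⊗ y₀, x - x₀, y - y₀)`, and the linear shear
`(z, u, v) ↦ (z - u ⊗ y₀ - x₀ ⊗ v, u, v)` turns these into `(u ⊗ v, u, v)` with
`u ∈ P - x₀`, `v ∈ Q - y₀`. Since both translates contain `0`, these vectors span the product
`span (U ⊗ V) × U × V` of `U = span (P - x₀)` and `V = span (Q - y₀)`, and
`span (U ⊗ V) ≅ U ⊗ V` has dimension `dim U * dim V` because vector spaces are flat.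
-/

open TensorProduct Submodule Module

namespace LinearEquiv

variable {R M₁ M₂ : Type*} [Semiring R] [AddCommGroup M₁] [AddCommMonoid M₂]
  [Module R M₁] [Module R M₂]

def prodShear (g : M₂ →ₗ[R] M₁) : (M₁ × M₂) ≃ₗ[R] M₁ × M₂ :=
  ((prodComm R M₁ M₂).trans ((refl R M₂).skewProd (refl R M₁) g)).trans (prodComm R M₂ M₁)

@[simp]
theorem prodShear_apply (g : M₂ →ₗ[R] M₁) (p : M₁ × M₂) :
    prodShear g p = (p.1 + g p.2, p.2) :=
  rfl

end LinearEquiv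

section CommRing

variable (R : Type*) {M N : Type*} [CommRing R] [AddCommGroup M] [Module R M]
  [AddCommGroup N] [Module R N]

def tmulGraph (A : Set M) (B : Set N) : Set ((M ⊗[R] N) × M × N) :=
  {p | ∃ x ∈ A, ∃ y ∈ B, p = (x ⊗ₜ[R] y, x, y)}

variable {R}

def tmulShear (x₀ : M) (y₀ : N) : ((M ⊗[R] N) × M × N) ≃ₗ[R] (M ⊗[R] N) × M × N :=
  LinearEquiv.prodShear
    (-((TensorProduct.mk R M N).flip y₀ ∘ₗ LinearMap.fst R M N +
      TensorProduct.mk R M N x₀ ∘ₗ LinearMap.snd R M N))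

theorem tmulShear_sub (x₀ x : M) (y₀ y : N) :
    tmulShear x₀ y₀ ((x ⊗ₜ[R] y, x, y) - (x₀ ⊗ₜ[R] y₀, x₀, y₀)) =
      ((x - x₀) ⊗ₜ[R] (y - y₀), x - x₀, y - y₀) := by
  ext
  · simp [tmulShear, sub_tmul, tmul_sub]
    abel
  all_goals rfl

theorem tmulShear_image_vsub_tmulGraph {A : Set M} {B : Set N} (x₀ : M) (y₀ : N) :
    tmulShear x₀ y₀ '' ((· -ᵥ (x₀ ⊗ₜ[R] y₀, x₀, y₀)) '' tmulGraph R A B) =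
      tmulGraph R ((· -ᵥ x₀) '' A) ((· -ᵥ y₀) '' B) := by
  ext p
  simp only [Set.image_image, vsub_eq_sub, tmulGraph]
  constructor
  · rintro ⟨_, ⟨x, hx, y, hy, rfl⟩, rfl⟩
    exact ⟨x - x₀, ⟨x, hx, rfl⟩, y - y₀, ⟨y, hy, rfl⟩, tmulShear_sub x₀ x y₀ y⟩
  · rintro ⟨_, ⟨x, hx, rfl⟩, _, ⟨y, hy, rfl⟩, rfl⟩
    exact ⟨_, ⟨x, hx, y, hy, rfl⟩, tmulShear_sub x₀ x y₀ y⟩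

theorem span_tmulGraph {A : Set M} {B : Set N} (hA : 0 ∈ A) (hB : 0 ∈ B) :
    span R (tmulGraph R A B) =
      (span R (Set.image2 (· ⊗ₜ[R] ·) A B)).prod ((span R A).prod (span R B)) := by
  rw [← LinearMap.span_inl_union_inr, ← LinearMap.span_inl_union_inr]
  have mem {u : M} {v : N} (hu : u ∈ A) (hv : v ∈ B) :
      ((u ⊗ₜ[R] v, u, v) : (M ⊗[R] N) × M × N) ∈ span R (tmulGraph R A B) :=
    subset_span ⟨u, hu, v, hv, rfl⟩
  apply span_eq_span
  · rintro _ ⟨u, hu, v, hv, rfl⟩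
    have hsplit : ((u ⊗ₜ[R] v, u, v) : (M ⊗[R] N) × M × N) =
        (u ⊗ₜ v, 0, 0) + ((0, u, 0) + (0, 0, v)) := by
      simp
    rw [hsplit]
    refine add_mem (subset_span (Or.inl ⟨_, Set.mem_image2_of_mem hu hv, rfl⟩)) (add_mem ?_ ?_)
    · exact subset_span (Or.inr ⟨_, Or.inl ⟨u, hu, rfl⟩, rfl⟩)
    · exact subset_span (Or.inr ⟨_, Or.inr ⟨v, hv, rfl⟩, rfl⟩)
  · rintro _ (⟨_, ⟨u, hu, v, hv, rfl⟩, rfl⟩ | ⟨_, ⟨u, hu, rfl⟩ | ⟨v, hv, rfl⟩, rfl⟩)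
    · simpa using sub_mem (sub_mem (mem hu hv) (mem hu hB)) (mem hA hv)
    · simpa using mem hu hB
    · simpa using mem hA hv

end CommRing

section Field

variable {K M N : Type*} [Field K] [AddCommGroup M] [Module K M] [AddCommGroup N] [Module K N]

theorem Submodule.finrank_prod [FiniteDimensional K M] [FiniteDimensional K N]
    (p : Submodule K M) (q : Submodule K N) :
    finrank K (p.prod q) = finrank K p + finrank K q := by
  have hrange : LinearMap.range (p.subtype.prodMap q.subtype) = p.prod q := by
    ext ⟨x, y⟩
    simp
  rw [← Module.finrank_prod, ← hrange, LinearMap.finrank_range_of_inj]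
  exact p.injective_subtype.prodMap q.injective_subtype

theorem finrank_span_image2_tmul (A : Set M) (B : Set N) :
    finrank K (span K (Set.image2 (· ⊗ₜ[K] ·) A B)) =
      finrank K (span K A) * finrank K (span K B) := by
  have hrange : span K (Set.image2 (· ⊗ₜ[K] ·) A B) =
      LinearMap.range (mapIncl (span K A) (span K B)) :=
    ((range_mapIncl _ _).trans (map₂_span_span K (TensorProduct.mk K M N) A B)).symm
  rw [hrange, LinearMap.finrank_range_of_inj
    (Module.Flat.tensorProduct_mapIncl_injective_of_right _ _), Module.finrank_tensorProduct]

theorem finrank_vectorSpan_tmulGraph [FiniteDimensional K M] [FiniteDimensional K N]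
    {A : Set M} {B : Set N} (hA : A.Nonempty) (hB : B.Nonempty) :
    finrank K (vectorSpan K (tmulGraph K A B)) =
      finrank K (vectorSpan K A) * finrank K (vectorSpan K B) +
        finrank K (vectorSpan K A) + finrank K (vectorSpan K B) := by
  obtain ⟨x₀, hx₀⟩ := hA
  obtain ⟨y₀, hy₀⟩ := hB
  set A' := (· -ᵥ x₀) '' A
  set B' := (· -ᵥ y₀) '' B
  have hA' : vectorSpan K A = span K A' := vectorSpan_eq_span_vsub_set_right K hx₀
  have hB' : vectorSpan K B = span K B' := vectorSpan_eq_span_vsub_set_right K hy₀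
  have h₀ : (x₀ ⊗ₜ[K] y₀, x₀, y₀) ∈ tmulGraph K A B := ⟨x₀, hx₀, y₀, hy₀, rfl⟩
  have hshear : (vectorSpan K (tmulGraph K A B)).map (tmulShear (R := K) x₀ y₀ : _ →ₗ[K] _) =
      span K (tmulGraph K A' B') := by
    rw [vectorSpan_eq_span_vsub_set_right K h₀, map_span, LinearEquiv.coe_coe,
      tmulShear_image_vsub_tmulGraph]
  rw [← LinearEquiv.finrank_map_eq (tmulShear x₀ y₀), hshear,
    span_tmulGraph (A := A') (B := B') ⟨x₀, hx₀, vsub_self x₀⟩ ⟨y₀, hy₀, vsub_self y₀⟩,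
    Submodule.finrank_prod, Submodule.finrank_prod, finrank_span_image2_tmul, hA', hB']
  ring

end Field

theorem vectorSpan_convexHull {𝕜 E : Type*} [Ring 𝕜] [PartialOrder 𝕜] [AddCommGroup E]
    [Module 𝕜 E] (s : Set E) :
    vectorSpan 𝕜 (convexHull 𝕜 s) = vectorSpan 𝕜 s := by
  rw [← direction_affineSpan, affineSpan_convexHull, direction_affineSpan]

theorem tensor_polytope_dim_general
    {E F : Type*} [AddCommGroup E] [Module ℝ E] [FiniteDimensional ℝ E]
    [AddCommGroup F] [Module ℝ F] [FiniteDimensional ℝ F]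
    (P : Set E) (Q : Set F)
    (hPne : P.Nonempty)
    (hQne : Q.Nonempty) :
    Module.finrank ℝ ↥(vectorSpan ℝ
        (convexHull ℝ {p : (E ⊗[ℝ] F) × E × F | ∃ x ∈ P, ∃ y ∈ Q, p = (x ⊗ₜ[ℝ] y, x, y)})) =
      Module.finrank ℝ ↥(vectorSpan ℝ P) * Module.finrank ℝ ↥(vectorSpan ℝ Q)
        + Module.finrank ℝ ↥(vectorSpan ℝ P) + Module.finrank ℝ ↥(vectorSpan ℝ Q) := by
  rw [vectorSpan_convexHull]
  exact finrank_vectorSpan_tmulGraph hPne hQne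

/-- `dim(P⊗Q) = (dim P)·(dim Q) + dim P + dim Q`, where
`P⊗Q = conv{(x ⊗ y, x, y) : x ∈ P, y ∈ Q} ⊆ (E ⊗ F) × E × F` and the dimension of a
nonempty convex set is the rank of its vector span. -/
theorem tensor_polytope_dim
    {E F : Type*} [AddCommGroup E] [Module ℝ E] [FiniteDimensional ℝ E]
    [AddCommGroup F] [Module ℝ F] [FiniteDimensional ℝ F]
    (P : Set E) (Q : Set F)
    (hP : ∃ SP : Finset E, P = convexHull ℝ (SP : Set E)) (hPne : P.Nonempty)
    (hQ : ∃ SQ : Finset F, Q = convexHull ℝ (SQ : Set F)) (hQne : Q.Nonempty) :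
    Module.finrank ℝ ↥(vectorSpan ℝ
        (convexHull ℝ {p : (E ⊗[ℝ] F) × E × F | ∃ x ∈ P, ∃ y ∈ Q, p = (x ⊗ₜ[ℝ] y, x, y)})) =
      Module.finrank ℝ ↥(vectorSpan ℝ P) * Module.finrank ℝ ↥(vectorSpan ℝ Q)
        + Module.finrank ℝ ↥(vectorSpan ℝ P) + Module.finrank ℝ ↥(vectorSpan ℝ Q) :=
  tensor_polytope_dim_general P Q hPne hQne
end

section
/- Let E, F, G be finite-dimensional real vector spaces, let P ⊆ E and Q ⊆ F be nonempty polytopes whose affine spans are E and F respectively, and let R ⊆ G be a polytope. Define P⊗Q ⊆ (E ⊗ F) × E × F as the convex hull of {(x ⊗ y, x, y) : x ∈ P, y ∈ Q}. Let ψ : E × F → G be a bi-affine map (for every fixed x ∈ E the map y ↦ ψ(x,y) is affine, and for every fixed y ∈ F the map x ↦ ψ(x,y) is affine) such that ψ(x,y) ∈ R for all x ∈ P, y ∈ Q. Then there exists a unique affine map φ : (E ⊗ F) × E × F → G such that φ(x ⊗ y, x, y) = ψ(x,y) for all x ∈ E and y ∈ F, and this φ satisfies φ(P⊗Q) ⊆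 R. -/
/-!
For a bi-affine `ψ`, the map `B(x, y) = ψ(x, y) - ψ(x, 0) - ψ(0, y) + ψ(0, 0)` is bilinear,
so `φ(t, x, y) = B̃ t + (ψ(x, 0) - ψ(0, 0)) + (ψ(0, y) - ψ(0, 0)) + ψ(0, 0)`, with `B̃` the
linear map induced on `E ⊗ F`, is an affine map extending `ψ`. It is unique because the
points `(x ⊗ y, x, y)` affinely span `(E ⊗ F) × E × F`, and it maps `P ⊗ Q` into `R` because
it maps the generating points into the convex set `R`.
-/
open TensorProduct

section TensorGraph

variable {k : Type*} [CommRing k] {E F G : Type*} [AddCommGroup E] [Module k E]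
  [AddCommGroup F] [Module k F] [AddCommGroup G] [Module k G]

theorem AffineMap.apply_sub_apply_zero (f : E →ᵃ[k] G) (x : E) : f x - f 0 = f.linear x := by
  simpa using (f.linearMap_vsub x 0).symm

theorem span_range_tmul_fst_snd :
    Submodule.span k (Set.range fun p : E × F => (p.1 ⊗ₜ[k] p.2, p.1, p.2)) = ⊤ := by
  set S := Submodule.span k (Set.range fun p : E × F => (p.1 ⊗ₜ[k] p.2, p.1, p.2))
  have mem (x : E) (y : F) : (x ⊗ₜ[k] y, x, y) ∈ S := Submodule.subset_span ⟨(x, y), rfl⟩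
  have mem_fst (x : E) : ((0 : E ⊗[k] F), x, (0 : F)) ∈ S := by simpa using mem x 0
  have mem_snd (y : F) : ((0 : E ⊗[k] F), (0 : E), y) ∈ S := by simpa using mem 0 y
  have mem_tensor (t : E ⊗[k] F) : (t, (0 : E), (0 : F)) ∈ S := by
    induction t using TensorProduct.induction_on with
    | zero => exact S.zero_mem
    | tmul x y =>
      convert S.sub_mem (S.sub_mem (mem x y) (mem_fst x)) (mem_snd y) using 1
      simp
    | add t t' ht ht' => simpa using S.add_mem ht ht'
  refine eq_top_iff.2 fun ⟨t, x, y⟩ _ => ?_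
  simpa using S.add_mem (S.add_mem (mem_tensor t) (mem_fst x)) (mem_snd y)

theorem affineSpan_range_tmul_fst_snd :
    affineSpan k (Set.range fun p : E × F => (p.1 ⊗ₜ[k] p.2, p.1, p.2)) = ⊤ := by
  have h0 : (0 : (E ⊗[k] F) × E × F) ∈
      Set.range fun p : E × F => (p.1 ⊗ₜ[k] p.2, p.1, p.2) := ⟨0, by simp⟩
  rw [AffineSubspace.affineSpan_eq_top_iff_vectorSpan_eq_top_of_nonempty k _ _ ⟨_, h0⟩,
    vectorSpan_eq_span_vsub_set_right k h0]
  simpa using span_range_tmul_fst_snd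

theorem affineMap_ext_tmul {φ φ' : ((E ⊗[k] F) × E × F) →ᵃ[k] G}
    (h : ∀ (x : E) (y : F), φ (x ⊗ₜ[k] y, x, y) = φ' (x ⊗ₜ[k] y, x, y)) : φ = φ' :=
  AffineMap.ext_on affineSpan_range_tmul_fst_snd (by rintro _ ⟨⟨x, y⟩, rfl⟩; exact h x y)

theorem exists_bilinear_of_biaffine (ψ : E × F → G)
    (hψ₁ : ∀ x : E, ∃ g : F →ᵃ[k] G, ∀ y : F, ψ (x, y) = g y)
    (hψ₂ : ∀ y : F, ∃ g : E →ᵃ[k] G, ∀ x : E, ψ (x, y) = g x) :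
    ∃ B : E →ₗ[k] F →ₗ[k] G,
      ∀ x y, B x y = ψ (x, y) - ψ (x, 0) - ψ (0, y) + ψ (0, 0) := by
  choose g₁ hg₁ using hψ₁
  choose g₂ hg₂ using hψ₂
  set b : E → F → G := fun x y => ψ (x, y) - ψ (x, 0) - ψ (0, y) + ψ (0, 0)
  have hb₁ (x y) : b x y = (g₁ x).linear y - (g₁ 0).linear y := by
    simp only [b, hg₁, ← AffineMap.apply_sub_apply_zero]; abel
  have hb₂ (x y) : b x y = (g₂ y).linear x - (g₂ 0).linear x := by
    simp only [b, hg₂, ← AffineMap.apply_sub_apply_zero]; abel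
  refine ⟨LinearMap.mk₂ k b (fun x x' y => ?_) (fun c x y => ?_) (fun x y y' => ?_)
    (fun c x y => ?_), fun _ _ => rfl⟩
  · simp only [hb₂, map_add]; abel
  · simp only [hb₂, map_smul, smul_sub]
  · simp only [hb₁, map_add]; abel
  · simp only [hb₁, map_smul, smul_sub]

theorem exists_affineMap_tmul_eq_of_biaffine (ψ : E × F → G)
    (hψ₁ : ∀ x : E, ∃ g : F →ᵃ[k] G, ∀ y : F, ψ (x, y) = g y)
    (hψ₂ : ∀ y : F, ∃ g : E →ᵃ[k] G, ∀ x : E, ψ (x, y) = g x) :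
    ∃ φ : ((E ⊗[k] F) × E × F) →ᵃ[k] G,
      ∀ (x : E) (y : F), φ (x ⊗ₜ[k] y, x, y) = ψ (x, y) := by
  obtain ⟨B, hB⟩ := exists_bilinear_of_biaffine ψ hψ₁ hψ₂
  obtain ⟨g₁, hg₁⟩ := hψ₁ 0
  obtain ⟨g₂, hg₂⟩ := hψ₂ 0
  let L : ((E ⊗[k] F) × E × F) →ₗ[k] G := lift B ∘ₗ LinearMap.fst k _ _ +
    g₂.linear ∘ₗ LinearMap.fst k E F ∘ₗ LinearMap.snd k _ _ +
    g₁.linear ∘ₗ LinearMap.snd k E F ∘ₗ LinearMap.snd k _ _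
  refine ⟨L.toAffineMap + AffineMap.const k _ (ψ (0, 0)), fun x y => ?_⟩
  simp only [AffineMap.coe_add, Pi.add_apply, LinearMap.coe_toAffineMap, AffineMap.const_apply,
    L, LinearMap.add_apply, LinearMap.comp_apply, LinearMap.fst_apply, LinearMap.snd_apply,
    lift.tmul, hB, ← AffineMap.apply_sub_apply_zero, ← hg₁, ← hg₂]
  abel

end TensorGraph

theorem tensor_polytope_universal_general
    {E F G : Type*} [AddCommGroup E] [Module ℝ E]
    [AddCommGroup F] [Module ℝ F]
    [AddCommGroup G] [Module ℝ G]
    (P : Set E) (Q : Set F) (R : Set G)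
    (hR : ∃ SR : Finset G, R = convexHull ℝ (SR : Set G))
    (ψ : E × F → G)
    (hψ₁ : ∀ x : E, ∃ g : F →ᵃ[ℝ] G, ∀ y : F, ψ (x, y) = g y)
    (hψ₂ : ∀ y : F, ∃ g : E →ᵃ[ℝ] G, ∀ x : E, ψ (x, y) = g x)
    (hψR : ∀ x ∈ P, ∀ y ∈ Q, ψ (x, y) ∈ R) :
    ∃ φ : ((E ⊗[ℝ] F) × E × F) →ᵃ[ℝ] G,
      (∀ (x : E) (y : F), φ (x ⊗ₜ[ℝ] y, x, y) = ψ (x, y)) ∧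
      (∀ p ∈ convexHull ℝ {p : (E ⊗[ℝ] F) × E × F | ∃ x ∈ P, ∃ y ∈ Q, p = (x ⊗ₜ[ℝ] y, x, y)},
        φ p ∈ R) ∧
      (∀ φ' : ((E ⊗[ℝ] F) × E × F) →ᵃ[ℝ] G,
        (∀ (x : E) (y : F), φ' (x ⊗ₜ[ℝ] y, x, y) = ψ (x, y)) → φ' = φ) := by
  obtain ⟨φ, hφ⟩ := exists_affineMap_tmul_eq_of_biaffine ψ hψ₁ hψ₂
  obtain ⟨SR, rfl⟩ := hR
  have hgen_sub :
      {p : (E ⊗[ℝ] F) × E × F | ∃ x ∈ P, ∃ y ∈ Q, p = (x ⊗ₜ[ℝ] y, x, y)} ⊆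
        φ ⁻¹' convexHull ℝ SR := by
    rintro _ ⟨x, hx, y, hy, rfl⟩
    simpa [hφ] using hψR x hx y hy
  refine ⟨φ, hφ, fun p hp => ?_, fun φ' hφ' => affineMap_ext_tmul fun x y => ?_⟩
  · exact convexHull_min hgen_sub ((convex_convexHull ℝ _).affine_preimage φ) hp
  · rw [hφ', hφ]

/-- Universal property of the tensor product polytope: a bi-affine map
`ψ : E × F → G` sending `P × Q` into `R` factors through a unique affine map
`φ : (E ⊗ F) × E × F → G` with `φ(x ⊗ y, x, y) = ψ(x,y)`, and `φ` maps `P⊗Q` into `R`. -/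
theorem tensor_polytope_universal
    {E F G : Type*} [AddCommGroup E] [Module ℝ E] [FiniteDimensional ℝ E]
    [AddCommGroup F] [Module ℝ F] [FiniteDimensional ℝ F]
    [AddCommGroup G] [Module ℝ G] [FiniteDimensional ℝ G]
    (P : Set E) (Q : Set F) (R : Set G)
    (hP : ∃ SP : Finset E, P = convexHull ℝ (SP : Set E)) (hPne : P.Nonempty)
    (hPspan : affineSpan ℝ P = ⊤)
    (hQ : ∃ SQ : Finset F, Q = convexHull ℝ (SQ : Set F)) (hQne : Q.Nonempty)
    (hQspan : affineSpan ℝ Q = ⊤)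
    (hR : ∃ SR : Finset G, R = convexHull ℝ (SR : Set G))
    (ψ : E × F → G)
    (hψ₁ : ∀ x : E, ∃ g : F →ᵃ[ℝ] G, ∀ y : F, ψ (x, y) = g y)
    (hψ₂ : ∀ y : F, ∃ g : E →ᵃ[ℝ] G, ∀ x : E, ψ (x, y) = g x)
    (hψR : ∀ x ∈ P, ∀ y ∈ Q, ψ (x, y) ∈ R) :
    ∃ φ : ((E ⊗[ℝ] F) × E × F) →ᵃ[ℝ] G,
      (∀ (x : E) (y : F), φ (x ⊗ₜ[ℝ] y, x, y) = ψ (x, y)) ∧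
      (∀ p ∈ convexHull ℝ {p : (E ⊗[ℝ] F) × E × F | ∃ x ∈ P, ∃ y ∈ Q, p = (x ⊗ₜ[ℝ] y, x, y)},
        φ p ∈ R) ∧
      (∀ φ' : ((E ⊗[ℝ] F) × E × F) →ᵃ[ℝ] G,
        (∀ (x : E) (y : F), φ' (x ⊗ₜ[ℝ] y, x, y) = ψ (x, y)) → φ' = φ) :=
  tensor_polytope_universal_general P Q R hR ψ hψ₁ hψ₂ hψR
end

section
/- Let m, n ≥ 1 and let □_m = [−1,1]^m ⊆ ℝ^m and □_n = [−1,1]^n ⊆ ℝ^n be the standard cubes. For an affine map f : ℝ^m → ℝ^n, write its j-th coordinate as f(x)_j = ⟨a_j, x⟩ + c_j with a_j ∈ ℝ^m, c_j ∈ ℝ. Then f(□_m) ⊆ □_n if and only if for every j, Σ_{i=1}^{m} |a_j(i)| + |c_j| ≤ 1. Consequently, the linear equivalence f ↦ ((a_1,c_1),…,(a_n,c_n)) from the space of affine maps ℝ^m → ℝ^n to (ℝ^{m+1})^n carries Hom(□_m, □_n) bijectively onto the n-fold product of the (m+1)-dimensional cross-polytope ◇_{m+1} = {z ∈ ℝ^{m+1}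 : Σ_{i=1}^{m+1} |z_i| ≤ 1}, i.e. Hom(□_m,□_n) ≅ (◇_{m+1})^n. -/
/-!
On the cube `[-1,1]^m` the affine function `x ↦ ⟨a, x⟩ + c` has maximal absolute value
`∑ᵢ |aᵢ| + |c|`, attained at `xᵢ = s tᵢ` where `s`, `tᵢ` are signs with `s c = |c|` and
`tᵢ aᵢ = |aᵢ|`. Applied to each coordinate of `f`, this says that `f` maps the cube into the cube
iff every row `(a_j, c_j)` of its coefficients lies in the cross-polytope. Hence `Hom(□_m, □_n)`
is the preimage of `(◇_{m+1})^n` under the bijective coefficient map.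
-/

def stdCube (k : ℕ) : Set (Fin k → ℝ) := {x | ∀ i, x i ∈ Set.Icc (-1 : ℝ) 1}

section SupOverCube

variable {R : Type*} [CommRing R] [LinearOrder R] [IsStrictOrderedRing R] {ι : Type*} [Fintype ι]

lemma exists_abs_eq_one_mul_eq_abs (c : R) : ∃ s : R, |s| = 1 ∧ s * c = |c| := by
  rcases le_total 0 c with h | h
  · exact ⟨1, by simp, by simp [abs_of_nonneg h]⟩
  · exact ⟨-1, by simp, by simp [abs_of_nonpos h]⟩

lemma abs_sum_mul_add_le (a x : ι → R) (c : R) (hx : ∀ i, |x i| ≤ 1) :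
    |∑ i, a i * x i + c| ≤ ∑ i, |a i| + |c| :=
  calc |∑ i, a i * x i + c| ≤ ∑ i, |a i * x i| + |c| :=
        (abs_add_le _ _).trans (add_le_add_left (Finset.abs_sum_le_sum_abs _ _) _)
    _ ≤ ∑ i, |a i| + |c| := by
        refine add_le_add_left (Finset.sum_le_sum fun i _ => ?_) _
        rw [abs_mul]
        exact mul_le_of_le_one_right (abs_nonneg _) (hx i)

lemma exists_abs_sum_mul_add_eq (a : ι → R) (c : R) :
    ∃ x : ι → R, (∀ i, |x i| ≤ 1) ∧ |∑ i, a i * x i + c| = ∑ i, |a i| + |c| := by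
  obtain ⟨s, hs, hsc⟩ := exists_abs_eq_one_mul_eq_abs c
  choose t ht hta using fun i => exists_abs_eq_one_mul_eq_abs (a i)
  refine ⟨fun i => s * t i, fun i => by simp [abs_mul, hs, ht], ?_⟩
  have hss : s * s = 1 := by rw [← abs_mul_abs_self, hs, one_mul]
  have key : s * (∑ i, a i * (s * t i) + c) = ∑ i, |a i| + |c| := by
    simp only [mul_add, Finset.mul_sum, hsc, ← hta]
    congr 1
    refine Finset.sum_congr rfl fun i _ => ?_
    linear_combination a i * t i * hss
  calc |∑ i, a i * (s * t i) + c| = |s * (∑ i, a i * (s * t i) + c)| := by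
        rw [abs_mul, hs, one_mul]
    _ = ∑ i, |a i| + |c| := by rw [key, abs_of_nonneg (by positivity)]

lemma forall_abs_le_one_abs_sum_mul_add_le_one_iff (a : ι → R) (c : R) :
    (∀ x : ι → R, (∀ i, |x i| ≤ 1) → |∑ i, a i * x i + c| ≤ 1) ↔ ∑ i, |a i| + |c| ≤ 1 := by
  refine ⟨fun h => ?_, fun h x hx => (abs_sum_mul_add_le a x c hx).trans h⟩
  obtain ⟨x, hx, hax⟩ := exists_abs_sum_mul_add_eq a c
  exact hax ▸ h x hx

end SupOverCube

lemma mem_stdCube_iff {k : ℕ} {x : Fin k → ℝ} : x ∈ stdCube k ↔ ∀ i, |x i| ≤ 1 := by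
  simp only [stdCube, Set.mem_ofPred_eq, Set.mem_Icc, abs_le]

lemma mapsTo_stdCube_iff {m n : ℕ} (f : (Fin m → ℝ) → (Fin n → ℝ)) (a : Fin n → Fin m → ℝ)
    (c : Fin n → ℝ) (hf : ∀ x j, f x j = ∑ i, a j i * x i + c j) :
    Set.MapsTo f (stdCube m) (stdCube n) ↔ ∀ j, ∑ i, |a j i| + |c j| ≤ 1 := by
  simp only [Set.MapsTo, mem_stdCube_iff, hf, ← forall_abs_le_one_abs_sum_mul_add_le_one_iff]
  exact ⟨fun h j x hx => h hx j, fun h x hx j => h j x hx⟩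

section AffineCoords

variable (R : Type*) [CommRing R] (m : ℕ) (κ : Type*)

def snocPiLinearEquiv : ((κ → R) × Matrix κ (Fin m) R) ≃ₗ[R] (κ → Fin (m + 1) → R) where
  toFun p j := Fin.snoc (p.2 j) (p.1 j)
  invFun z := (fun j => z j (Fin.last m), Matrix.of fun j => Fin.init (z j))
  map_add' _ _ := funext fun _ => funext <| Fin.lastCases (by simp) (by simp)
  map_smul' _ _ := funext fun _ => funext <| Fin.lastCases (by simp) (by simp)
  left_inv p := by ext <;> simp
  right_inv z := funext fun j => Fin.snoc_init_self (z j)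

def affineCoords : ((Fin m → R) →ᵃ[R] (κ → R)) ≃ₗ[R] (κ → Fin (m + 1) → R) :=
  (AffineMap.toConstProdLinearMap R).trans <|
    ((LinearEquiv.refl R _).prodCongr LinearMap.toMatrix').trans (snocPiLinearEquiv R m κ)

variable {R m κ}

@[simp]
lemma affineCoords_castSucc (f : (Fin m → R) →ᵃ[R] (κ → R)) (j : κ) (i : Fin m) :
    affineCoords R m κ f j i.castSucc = f.linear (Pi.single i 1) j := by
  simp [affineCoords, snocPiLinearEquiv]

@[simp]
lemma affineCoords_last (f : (Fin m → R) →ᵃ[R] (κ → R)) (j : κ) :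
    affineCoords R m κ f j (Fin.last m) = f 0 j := by
  simp [affineCoords, snocPiLinearEquiv]

lemma AffineMap.apply_eq_sum_affineCoords (f : (Fin m → R) →ᵃ[R] (κ → R)) (x : Fin m → R)
    (j : κ) :
    f x j = ∑ i, affineCoords R m κ f j i.castSucc * x i + affineCoords R m κ f j (Fin.last m) := by
  rw [f.decomp, Pi.add_apply, ← LinearMap.toMatrix'_mulVec, Pi.add_apply]
  simp only [affineCoords_castSucc, affineCoords_last, Matrix.mulVec, dotProduct,
    LinearMap.toMatrix'_apply]

end AffineCoords

theorem hom_cube_cube_general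
    (m n : ℕ) :
    (∀ (f : (Fin m → ℝ) →ᵃ[ℝ] (Fin n → ℝ)) (a : Fin n → Fin m → ℝ) (c : Fin n → ℝ),
      (∀ (x : Fin m → ℝ) (j : Fin n), f x j = (∑ i, a j i * x i) + c j) →
      ((∀ x ∈ stdCube m, f x ∈ stdCube n) ↔ ∀ j, (∑ i, |a j i|) + |c j| ≤ 1)) ∧
    (∃ Φ : ((Fin m → ℝ) →ᵃ[ℝ] (Fin n → ℝ)) ≃ₗ[ℝ] (Fin n → Fin (m + 1) → ℝ),
      (∀ (f : (Fin m → ℝ) →ᵃ[ℝ] (Fin n → ℝ)) (j : Fin n),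
        (∀ i : Fin m, Φ f j i.castSucc = f.linear (Pi.single i 1) j) ∧
        Φ f j (Fin.last m) = f 0 j) ∧
      Φ '' {f : (Fin m → ℝ) →ᵃ[ℝ] (Fin n → ℝ) | ∀ x ∈ stdCube m, f x ∈ stdCube n} =
        {z : Fin n → Fin (m + 1) → ℝ | ∀ j, (∑ i, |z j i|) ≤ 1}) := by
  refine ⟨fun f a c => mapsTo_stdCube_iff f a c, affineCoords ℝ m (Fin n),
    fun f j => ⟨affineCoords_castSucc f j, affineCoords_last f j⟩, ?_⟩
  have hom_eq_preimage :
      {f : (Fin m → ℝ) →ᵃ[ℝ] (Fin n → ℝ) | ∀ x ∈ stdCube m, f x ∈ stdCube n} =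
        affineCoords ℝ m (Fin n) ⁻¹' {z | ∀ j, ∑ i, |z j i| ≤ 1} := by
    ext f
    simp only [Set.mem_ofPred_eq, Set.mem_preimage, Fin.sum_univ_castSucc]
    exact mapsTo_stdCube_iff f _ _ f.apply_eq_sum_affineCoords
  rw [hom_eq_preimage, Set.image_preimage_eq _ (affineCoords ℝ m (Fin n)).surjective]

/-- An affine map `f : ℝ^m → ℝ^n` with coordinates `f(x)_j = ⟨a_j,x⟩ + c_j`
maps `□_m` into `□_n` iff `Σᵢ|a_j(i)| + |c_j| ≤ 1` for every `j`; consequently the linear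
equivalence `f ↦ ((a_1,c_1),…,(a_n,c_n))` carries `Hom(□_m,□_n)` bijectively onto the
`n`-fold product of the `(m+1)`-dimensional cross-polytope (the unit `ℓ¹` ball). -/
theorem hom_cube_cube
    (m n : ℕ) (hm : 1 ≤ m) (hn : 1 ≤ n) :
    (∀ (f : (Fin m → ℝ) →ᵃ[ℝ] (Fin n → ℝ)) (a : Fin n → Fin m → ℝ) (c : Fin n → ℝ),
      (∀ (x : Fin m → ℝ) (j : Fin n), f x j = (∑ i, a j i * x i) + c j) →
      ((∀ x ∈ stdCube m, f x ∈ stdCube n) ↔ ∀ j, (∑ i, |a j i|) + |c j| ≤ 1)) ∧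
    (∃ Φ : ((Fin m → ℝ) →ᵃ[ℝ] (Fin n → ℝ)) ≃ₗ[ℝ] (Fin n → Fin (m + 1) → ℝ),
      (∀ (f : (Fin m → ℝ) →ᵃ[ℝ] (Fin n → ℝ)) (j : Fin n),
        (∀ i : Fin m, Φ f j i.castSucc = f.linear (Pi.single i 1) j) ∧
        Φ f j (Fin.last m) = f 0 j) ∧
      Φ '' {f : (Fin m → ℝ) →ᵃ[ℝ] (Fin n → ℝ) | ∀ x ∈ stdCube m, f x ∈ stdCube n} =
        {z : Fin n → Fin (m + 1) → ℝ | ∀ j, (∑ i, |z j i|) ≤ 1}) :=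
  hom_cube_cube_general m n
end

section
/- Let E and F be finite-dimensional real vector spaces, let P ⊆ E be a nonempty polytope whose affine span is E, let Q ⊆ F be a polytope, and let f : E → F be an affine map with f(P) ⊆ Q that is an extreme point of Hom(P,Q) = {g : E → F affine | g(P) ⊆ Q}. Then: (a) f is an extreme point of {g : E → F affine | g(P) ⊆ f(P)} (so the surjective factor of f is a vertex map); and (b) letting A ⊆ F denote the affine span of the image f(P), the inclusion affine map ι : A → F is an extreme point of {h : A → F affine | h(x) ∈ Q for every x ∈ A with x ∈ f(P)} (so the injective factor of f is a vertex map). -/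
attribute [local instance] AffineSubspace.toAddTorsor

/-!
Part (a) holds because `{g | g(P) ⊆ f(P)}` is a subset of `Hom(P, Q)` containing `f`.
For part (b), since `P` spans `E`, the affine span `A` of `f(P)` is the range of `f`, so `f`
factors as `ι ∘ π` with `π : E → A` surjective. Precomposition with `π` is then an injective
linear map sending `{h : A → F | h(A ∩ f(P)) ⊆ Q}` into `Hom(P, Q)` and `ι` to the vertex `f`,
and injective linear maps reflect extreme points.
-/

open Set

theorem mem_extremePoints_of_injective_linearMap {𝕜 M N : Type*}
    [Ring 𝕜] [PartialOrder 𝕜] [IsOrderedRing 𝕜]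
    [AddCommGroup M] [Module 𝕜 M] [AddCommGroup N] [Module 𝕜 N]
    {φ : M →ₗ[𝕜] N} (hφ : Function.Injective φ) {S : Set M} {T : Set N} (hST : MapsTo φ S T)
    {x : M} (hx : x ∈ S) (hφx : φ x ∈ T.extremePoints 𝕜) : x ∈ S.extremePoints 𝕜 := by
  refine ⟨hx, fun y hy z hz hseg => hφ (hφx.2 (hST hy) (hST hz) ?_)⟩
  have h := image_openSegment 𝕜 φ.toAffineMap y z
  rw [LinearMap.coe_toAffineMap] at h
  exact h ▸ mem_image_of_mem φ hseg

namespace AffineMap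

section Ring

variable {k V₁ P₁ V₂ P₂ : Type*} [Ring k]
  [AddCommGroup V₁] [Module k V₁] [AddTorsor V₁ P₁]
  [AddCommGroup V₂] [Module k V₂] [AddTorsor V₂ P₂]

theorem linear_mem_direction_of_forall_mem (f : P₁ →ᵃ[k] P₂) {A : AffineSubspace k P₂}
    (h : ∀ x, f x ∈ A) (v : V₁) : f.linear v ∈ A.direction := by
  obtain ⟨p⟩ : Nonempty P₁ := inferInstance
  rw [← vadd_vsub v p, linearMap_vsub]
  exact AffineSubspace.vsub_mem_direction (h _) (h _)

def codRestrict (f : P₁ →ᵃ[k] P₂) (A : AffineSubspace k P₂) [Nonempty A] (h : ∀ x, f x ∈ A) :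
    P₁ →ᵃ[k] A where
  toFun x := ⟨f x, h x⟩
  linear := f.linear.codRestrict A.direction (f.linear_mem_direction_of_forall_mem h)
  map_vadd' p v := Subtype.ext (f.map_vadd p v)

theorem codRestrict_surjective (f : P₁ →ᵃ[k] P₂) (A : AffineSubspace k P₂) [Nonempty A]
    (h : ∀ x, f x ∈ A) (hA : (A : Set P₂) ⊆ range f) : Function.Surjective (f.codRestrict A h) :=
  fun y => (hA y.2).imp fun _ hx => Subtype.ext hx

end Ring

section CommRing

variable {k V₁ P₁ V₂ P₂ V₃ : Type*} [CommRing k]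
  [AddCommGroup V₁] [Module k V₁] [AddTorsor V₁ P₁]
  [AddCommGroup V₂] [Module k V₂] [AddTorsor V₂ P₂] [AddCommGroup V₃] [Module k V₃]

def precomp (π : P₁ →ᵃ[k] P₂) : (P₂ →ᵃ[k] V₃) →ₗ[k] (P₁ →ᵃ[k] V₃) where
  toFun h := h.comp π
  map_add' _ _ := rfl
  map_smul' _ _ := rfl

theorem precomp_injective {π : P₁ →ᵃ[k] P₂} (hπ : Function.Surjective π) :
    Function.Injective (precomp (V₃ := V₃) π) := fun h₁ h₂ h => by
  ext y
  obtain ⟨x, rfl⟩ := hπ y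
  exact congr($h x)

end CommRing

end AffineMap

theorem coe_affineSpan_image_of_affineSpan_eq_top {k V₁ P₁ V₂ P₂ : Type*} [Ring k]
    [AddCommGroup V₁] [Module k V₁] [AddTorsor V₁ P₁]
    [AddCommGroup V₂] [Module k V₂] [AddTorsor V₂ P₂]
    (f : P₁ →ᵃ[k] P₂) {P : Set P₁} (hP : affineSpan k P = ⊤) :
    (affineSpan k (f '' P) : Set P₂) = range f := by
  rw [← AffineSubspace.map_span, hP, AffineSubspace.coe_map, AffineSubspace.top_coe, image_univ]

theorem vertex_map_factors_general
    {E F : Type*} [AddCommGroup E] [Module ℝ E]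
    [AddCommGroup F] [Module ℝ F]
    (P : Set E) (Q : Set F)
    (hPspan : affineSpan ℝ P = ⊤)
    (f : E →ᵃ[ℝ] F)
    (hf : f ∈ Set.extremePoints ℝ {g : E →ᵃ[ℝ] F | ∀ x ∈ P, g x ∈ Q})
    [Nonempty ↥(affineSpan ℝ (f '' P))] :
    (f ∈ Set.extremePoints ℝ {g : E →ᵃ[ℝ] F | ∀ x ∈ P, g x ∈ f '' P}) ∧
    ((affineSpan ℝ (f '' P)).subtype ∈
      Set.extremePoints ℝ
        {h : ↥(affineSpan ℝ (f '' P)) →ᵃ[ℝ] F |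
          ∀ x : ↥(affineSpan ℝ (f '' P)), (x : F) ∈ f '' P → h x ∈ Q}) := by
  have hfPQ : f '' P ⊆ Q := image_subset_iff.2 hf.1
  constructor
  · refine inter_extremePoints_subset_extremePoints_of_subset ?_ ⟨fun x hx => ⟨x, hx, rfl⟩, hf⟩
    exact fun g hg x hx => hfPQ (hg x hx)
  · have hrange := coe_affineSpan_image_of_affineSpan_eq_top f hPspan
    let π := f.codRestrict _ fun x => hrange ▸ mem_range_self x
    have hπ : Function.Surjective π := f.codRestrict_surjective _ _ hrange.subset
    -- `precomp π` sends the inclusion `(affineSpan ℝ (f '' P)).subtype` to `f` definitionally.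
    refine mem_extremePoints_of_injective_linearMap (AffineMap.precomp_injective hπ)
      (T := {g : E →ᵃ[ℝ] F | ∀ x ∈ P, g x ∈ Q}) ?_ (fun x hx => hfPQ hx) hf
    exact fun h hh x hx => hh (π x) ⟨x, hx, rfl⟩

/-- If `f` is a vertex (extreme point) of `Hom(P,Q)`, then (a) its surjective
factor is a vertex: `f` is extreme in `{g | g(P) ⊆ f(P)}`; and (b) its injective factor is a
vertex: the inclusion of `A = affineSpan(f(P))` into `F` is extreme in the set of affine maps
`A → F` sending every point of `A` lying in `f(P)` into `Q`. -/
theorem vertex_map_factors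
    {E F : Type*} [AddCommGroup E] [Module ℝ E] [FiniteDimensional ℝ E]
    [AddCommGroup F] [Module ℝ F] [FiniteDimensional ℝ F]
    (P : Set E) (Q : Set F)
    (hP : ∃ SP : Finset E, P = convexHull ℝ (SP : Set E)) (hPne : P.Nonempty)
    (hPspan : affineSpan ℝ P = ⊤)
    (hQ : ∃ SQ : Finset F, Q = convexHull ℝ (SQ : Set F))
    (f : E →ᵃ[ℝ] F) (hfPQ : ∀ x ∈ P, f x ∈ Q)
    (hf : f ∈ Set.extremePoints ℝ {g : E →ᵃ[ℝ] F | ∀ x ∈ P, g x ∈ Q})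
    [Nonempty ↥(affineSpan ℝ (f '' P))] :
    (f ∈ Set.extremePoints ℝ {g : E →ᵃ[ℝ] F | ∀ x ∈ P, g x ∈ f '' P}) ∧
    ((affineSpan ℝ (f '' P)).subtype ∈
      Set.extremePoints ℝ
        {h : ↥(affineSpan ℝ (f '' P)) →ᵃ[ℝ] F |
          ∀ x : ↥(affineSpan ℝ (f '' P)), (x : F) ∈ f '' P → h x ∈ Q}) :=
  vertex_map_factors_general P Q hPspan f hf
end

section
/- Let E and F be finite-dimensional real vector spaces, let P ⊆ E be a nonempty polytope whose affine span is E, let Q ⊆ F be a polytope, and let f : E → F be an affine map with f(P) ⊆ Q. Assume: (1) every extreme point of the image polytope f(P) is an extreme point of Q; (2) f is an extreme point of {g : E → F affine | g(P) ⊆ f(P)}; and (3) for every extreme point v of P, either f(v) is an extreme point of f(P) or f(v) lies in the intrinsic (relative) interior of f(P). Then f is an extreme point of Hom(P,Q) = {g : E → F affine | g(P) ⊆ Q}. -/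
/-!
Let `A` be the set of vertices of `P` that `f` sends to vertices of `f(P)`. If `A` did not
affinely span `E`, there would be a nonzero affine map `L` vanishing on `A` with values parallel
to `f(P)`; as every other vertex goes to the relative interior of `f(P)`, both `f + tL` and
`f - tL` map `P` into `f(P)` for small `t ≠ 0`, against (2). So `A` spans `E`. If now `f` lies
in an open segment between `g, h ∈ Hom(P,Q)`, then `f(u)` is a vertex of `Q` for `u ∈ A` by (1),
so `g = f` on `A`, hence everywhere.
-/

open Set Filter Topology

theorem AffineMap.exists_ne_zero_forall_eq_zero_of_affineSpan_ne_top
    {k V P : Type*} [Field k] [AddCommGroup V] [Module k V] [AddTorsor V P]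
    {s : Set P} (hs : affineSpan k s ≠ ⊤) :
    ∃ φ : P →ᵃ[k] k, φ ≠ 0 ∧ ∀ x ∈ s, φ x = 0 := by
  rcases s.eq_empty_or_nonempty with rfl | ⟨p, hp⟩
  · obtain ⟨q⟩ := (inferInstance : Nonempty P)
    exact ⟨AffineMap.const k P 1, fun h => one_ne_zero (congrArg (· q) h), by simp⟩
  have hlt : vectorSpan k s < ⊤ := by
    rwa [lt_top_iff_ne_top, ← direction_affineSpan, Ne,
      AffineSubspace.direction_eq_top_iff_of_nonempty ((affineSpan_nonempty k).2 ⟨p, hp⟩)]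
  obtain ⟨l, hl0, hl⟩ := (vectorSpan k s).exists_le_ker_of_lt_top hlt
  obtain ⟨v, hv⟩ : ∃ v, l v ≠ 0 := by
    by_contra! h
    exact hl0 (LinearMap.ext h)
  refine ⟨l.toAffineMap.comp (AffineEquiv.vaddConst k p).symm.toAffineMap, fun h => hv ?_,
    fun x hx => hl (vsub_mem_vectorSpan k hx hp)⟩
  simpa using congrArg (· (v +ᵥ p)) h

section Ordered

variable {𝕜 E F : Type*} [CommRing 𝕜] [PartialOrder 𝕜]
  [AddCommGroup E] [Module 𝕜 E] [AddCommGroup F] [Module 𝕜 F]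

theorem AffineMap.mapsTo_convexHull {f : E →ᵃ[𝕜] F} {s : Set E} {t : Set F}
    (ht : Convex 𝕜 t) (h : MapsTo f s t) : MapsTo f (convexHull 𝕜 s) t := by
  have : f '' convexHull 𝕜 s ⊆ t := by
    rw [f.image_convexHull]
    exact convexHull_min h.image_subset ht
  exact fun x hx => this (mem_image_of_mem f hx)

theorem AffineMap.mem_extremePoints_of_affineSpan_eq_top {P : Set E} {Q : Set F}
    {f : E →ᵃ[𝕜] F} (hf : ∀ x ∈ P, f x ∈ Q) {A : Set E} (hAP : A ⊆ P)
    (hA : affineSpan 𝕜 A = ⊤) (hext : ∀ u ∈ A, f u ∈ extremePoints 𝕜 Q) :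
    f ∈ extremePoints 𝕜 {g : E →ᵃ[𝕜] F | ∀ x ∈ P, g x ∈ Q} := by
  refine ⟨hf, fun g hg h hh ⟨a, b, ha, hb, hab, hgh⟩ => AffineMap.ext_on hA fun u hu => ?_⟩
  refine (hext u hu).2 (hg u (hAP hu)) (hh u (hAP hu)) ⟨a, b, ha, hb, hab, ?_⟩
  rw [← hgh]
  rfl

end Ordered

theorem eventually_add_smul_mem_of_mem_intrinsicInterior {F : Type*} [AddCommGroup F]
    [Module ℝ F] [TopologicalSpace F] [IsTopologicalAddGroup F] [ContinuousSMul ℝ F]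
    {R : Set F} {x w : F} (hx : x ∈ intrinsicInterior ℝ R) (hw : w ∈ vectorSpan ℝ R) :
    ∀ᶠ t in 𝓝 (0 : ℝ), x + t • w ∈ R := by
  obtain ⟨y, hy, rfl⟩ := hx
  have hline : ∀ t : ℝ, t • w +ᵥ (y : F) ∈ affineSpan ℝ R := fun t =>
    AffineSubspace.vadd_mem_of_mem_direction
      (by rw [direction_affineSpan]; exact Submodule.smul_mem _ t hw) y.2
  let c : ℝ → affineSpan ℝ R := fun t => ⟨t • w +ᵥ (y : F), hline t⟩
  have hc : Continuous c := by fun_prop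
  have hc0 : c 0 = y := by ext; simp [c]
  have := hc.continuousAt.preimage_mem_nhds (hc0 ▸ isOpen_interior.mem_nhds hy)
  filter_upwards [this] with t ht
  simpa [c, add_comm] using interior_subset ht

section Real

variable {E F : Type*} [AddCommGroup E] [Module ℝ E] [AddCommGroup F] [Module ℝ F]
  [TopologicalSpace F] [IsTopologicalAddGroup F] [ContinuousSMul ℝ F]

-- For small `t ≠ 0`, `f ± t • L` still maps `V`, hence `convexHull ℝ V`, into `R`.
theorem AffineMap.eq_zero_of_mem_extremePoints_mapsTo_convexHull {V : Set E} (hV : V.Finite)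
    {R : Set F} (hR : Convex ℝ R) {f L : E →ᵃ[ℝ] F}
    (hf : f ∈ extremePoints ℝ {g : E →ᵃ[ℝ] F | ∀ x ∈ convexHull ℝ V, g x ∈ R})
    (hL : ∀ u ∈ V, L u = 0 ∨ f u ∈ intrinsicInterior ℝ R ∧ L u ∈ vectorSpan ℝ R) : L = 0 := by
  have hlocal : ∀ u ∈ V, ∀ᶠ t in 𝓝 (0 : ℝ), f u + t • L u ∈ R ∧ f u + t • -L u ∈ R := by
    intro u hu
    rcases hL u hu with hLu | ⟨hint, hdir⟩
    · simpa [hLu] using hf.1 u (subset_convexHull ℝ V hu)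
    · exact (eventually_add_smul_mem_of_mem_intrinsicInterior hint hdir).and
        (eventually_add_smul_mem_of_mem_intrinsicInterior hint (neg_mem hdir))
  obtain ⟨t, ht, ht0⟩ := (((eventually_all_finite hV).2 hlocal).filter_mono
    nhdsWithin_le_nhds |>.and self_mem_nhdsWithin).exists (f := 𝓝[≠] (0 : ℝ))
  have hplus : ∀ x ∈ convexHull ℝ V, (f + t • L) x ∈ R :=
    (f + t • L).mapsTo_convexHull hR fun u hu => by simpa using (ht u hu).1
  have hminus : ∀ x ∈ convexHull ℝ V, (f - t • L) x ∈ R :=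
    (f - t • L).mapsTo_convexHull hR fun u hu => by simpa [sub_eq_add_neg] using (ht u hu).2
  have hmid : f ∈ openSegment ℝ (f + t • L) (f - t • L) :=
    ⟨1 / 2, 1 / 2, by norm_num, by norm_num, by norm_num, by module⟩
  have := hf.2 hplus hminus hmid
  rw [add_eq_left, smul_eq_zero] at this
  exact this.resolve_left ht0

theorem affineSpan_setOf_mem_extremePoints_eq_top {V : Set E} (hV : V.Finite)
    (hVspan : affineSpan ℝ V = ⊤) {R : Set F} (hR : Convex ℝ R) {f : E →ᵃ[ℝ] F}
    (hf : f ∈ extremePoints ℝ {g : E →ᵃ[ℝ] F | ∀ x ∈ convexHull ℝ V, g x ∈ R})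
    (hfV : ∀ v ∈ V, f v ∈ extremePoints ℝ R ∨ f v ∈ intrinsicInterior ℝ R) :
    affineSpan ℝ {v ∈ V | f v ∈ extremePoints ℝ R} = ⊤ := by
  by_cases hsub : R.Subsingleton
  · have hall : {v ∈ V | f v ∈ extremePoints ℝ R} = V := sep_eq_self_iff_mem_true.2 fun v hv =>
      have hfv := hf.1 v (subset_convexHull ℝ V hv)
      ⟨hfv, fun x hx _ _ _ => hsub hx hfv⟩
    rwa [hall]
  by_contra hA
  obtain ⟨φ, hφ, hφA⟩ := AffineMap.exists_ne_zero_forall_eq_zero_of_affineSpan_ne_top hA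
  obtain ⟨d, hd, hd0⟩ := (Submodule.ne_bot_iff _).1 (mt (vectorSpan_eq_bot_iff_subsingleton ℝ).1 hsub)
  let L : E →ᵃ[ℝ] F := (LinearMap.toSpanSingleton ℝ F d).toAffineMap.comp φ
  have hL : L = 0 := AffineMap.eq_zero_of_mem_extremePoints_mapsTo_convexHull hV hR hf
    fun u hu => by
      by_cases hu' : f u ∈ extremePoints ℝ R
      · left
        simp [L, hφA u ⟨hu, hu'⟩]
      · exact .inr ⟨(hfV u hu).resolve_left hu', Submodule.smul_mem _ _ hd⟩
  obtain ⟨z, hz⟩ : ∃ z, φ z ≠ 0 := by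
    by_contra! h
    exact hφ (AffineMap.ext h)
  exact smul_ne_zero hz hd0 (congrArg (· z) hL : L z = 0)

end Real

theorem Set.Finite.convexHull_extremePoints_convexHull {E : Type*} [AddCommGroup E] [Module ℝ E]
    [TopologicalSpace E] [T2Space E] [IsTopologicalAddGroup E] [ContinuousSMul ℝ E]
    [LocallyConvexSpace ℝ E] {s : Set E} (hs : s.Finite) :
    convexHull ℝ (extremePoints ℝ (convexHull ℝ s)) = convexHull ℝ s := by
  have hfin : (extremePoints ℝ (convexHull ℝ s)).Finite := hs.subset extremePoints_convexHull_subset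
  rw [← (hfin.isClosed_convexHull ℝ).closure_eq,
    closure_convexHull_extremePoints (hs.isCompact_convexHull ℝ) (convex_convexHull ℝ s)]

theorem deflation_composite_is_vertex_general
    {E F : Type*} [NormedAddCommGroup E] [NormedSpace ℝ E]
    [NormedAddCommGroup F] [NormedSpace ℝ F]
    (P : Set E) (Q : Set F)
    (hP : ∃ SP : Finset E, P = convexHull ℝ (SP : Set E))
    (hPspan : affineSpan ℝ P = ⊤)
    (f : E →ᵃ[ℝ] F) (hfPQ : ∀ x ∈ P, f x ∈ Q)
    (h1 : Set.extremePoints ℝ (f '' P) ⊆ Set.extremePoints ℝ Q)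
    (h2 : f ∈ Set.extremePoints ℝ {g : E →ᵃ[ℝ] F | ∀ x ∈ P, g x ∈ f '' P})
    (h3 : ∀ v ∈ Set.extremePoints ℝ P,
      f v ∈ Set.extremePoints ℝ (f '' P) ∨ f v ∈ intrinsicInterior ℝ (f '' P)) :
    f ∈ Set.extremePoints ℝ {g : E →ᵃ[ℝ] F | ∀ x ∈ P, g x ∈ Q} := by
  obtain ⟨SP, rfl⟩ := hP
  have hV : (extremePoints ℝ (convexHull ℝ (SP : Set E))).Finite :=
    SP.finite_toSet.subset extremePoints_convexHull_subset
  have hPV := SP.finite_toSet.convexHull_extremePoints_convexHull (E := E)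
  have hVspan : affineSpan ℝ (extremePoints ℝ (convexHull ℝ (SP : Set E))) = ⊤ := by
    rwa [← affineSpan_convexHull, hPV]
  have hA := affineSpan_setOf_mem_extremePoints_eq_top hV hVspan
    ((convex_convexHull ℝ _).affine_image f) (by rwa [hPV]) h3
  exact f.mem_extremePoints_of_affineSpan_eq_top hfPQ (fun v hv => extremePoints_subset hv.1) hA
    fun v hv => h1 hv.2

/-- If every vertex of the image polytope `f(P)` is a vertex of `Q`, the
surjective factor of `f` is a vertex map, and every vertex of `P` maps either to a vertex of
`f(P)` or into its intrinsic interior (i.e. the surjective factor is a deflation), then `f`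
is a vertex (extreme point) of `Hom(P,Q)`. -/
theorem deflation_composite_is_vertex
    {E F : Type*} [NormedAddCommGroup E] [NormedSpace ℝ E] [FiniteDimensional ℝ E]
    [NormedAddCommGroup F] [NormedSpace ℝ F] [FiniteDimensional ℝ F]
    (P : Set E) (Q : Set F)
    (hP : ∃ SP : Finset E, P = convexHull ℝ (SP : Set E)) (hPne : P.Nonempty)
    (hPspan : affineSpan ℝ P = ⊤)
    (hQ : ∃ SQ : Finset F, Q = convexHull ℝ (SQ : Set F))
    (f : E →ᵃ[ℝ] F) (hfPQ : ∀ x ∈ P, f x ∈ Q)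
    (h1 : Set.extremePoints ℝ (f '' P) ⊆ Set.extremePoints ℝ Q)
    (h2 : f ∈ Set.extremePoints ℝ {g : E →ᵃ[ℝ] F | ∀ x ∈ P, g x ∈ f '' P})
    (h3 : ∀ v ∈ Set.extremePoints ℝ P,
      f v ∈ Set.extremePoints ℝ (f '' P) ∨ f v ∈ intrinsicInterior ℝ (f '' P)) :
    f ∈ Set.extremePoints ℝ {g : E →ᵃ[ℝ] F | ∀ x ∈ P, g x ∈ Q} :=
  deflation_composite_is_vertex_general P Q hP hPspan f hfPQ h1 h2 h3
end
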